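/- arXiv:2504.05507 — 3 statements merged into one kernel-verified Lean document; each statement's English description precedes it below -/
import Mathlib

section
/- In a system (S, (L_x), (Ω_{x,y})) satisfying the minimal axioms, if x ξ x′ and y ξ y′ in S, then (x ∧ y) ξ (x′ ∧ y′). -/
/-- A partial bijection from `A` to `B`, modeled as a functional and injective
relation `R : A → B → Prop`.  Its domain is `rdom R` and its image is `rim R`. -/
def IsPartialBij {A : Type u} {B : Type v} (R : A → B → Prop) : Prop :=
  (∀ a b b', R a b → R a b' → b = b') ∧ (∀ a a' b, R a b → R a' b → a = a')

/-- The domain of a partial bijection (as a relation). -/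
def rdom {A : Type u} {B : Type v} (R : A → B → Prop) : Set A := {a | ∃ b, R a b}

/-- The image of a partial bijection (as a relation). -/
def rim {A : Type u} {B : Type v} (R : A → B → Prop) : Set B := {b | ∃ a, R a b}

/-- A (nonempty) filter of a lattice: an up-set closed under meets. -/
def IsLatFilter {A : Type u} [Lattice A] (F : Set A) : Prop :=
  F.Nonempty ∧ (∀ a ∈ F, ∀ b, a ≤ b → b ∈ F) ∧ (∀ a ∈ F, ∀ b ∈ F, a ⊓ b ∈ F)

/-- A (nonempty) ideal of a lattice: a down-set closed under joins. -/
def IsLatIdeal {A : Type u} [Lattice A] (I : Set A) : Prop :=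
  I.Nonempty ∧ (∀ a ∈ I, ∀ b, b ≤ a → b ∈ I) ∧ (∀ a ∈ I, ∀ b ∈ I, a ⊔ b ∈ I)

/-- A relation between lattices preserves joins and meets; together with
`IsPartialBij` this says the relation is a lattice isomorphism from its
domain onto its image. -/
def IsLatHomRel {A : Type u} {B : Type v} [Lattice A] [Lattice B]
    (R : A → B → Prop) : Prop :=
  (∀ a a' b b', R a b → R a' b' → R (a ⊔ a') (b ⊔ b')) ∧
  (∀ a a' b b', R a b → R a' b' → R (a ⊓ a') (b ⊓ b'))

/-- `ChainComp L Ω a b f` says there is a saturated chain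
`a = x₀ ⋖ x₁ ⋖ ⋯ ⋖ xₙ = b` in `S` such that `f` is the composite
`Ω_{x_{n-1},x_n} ∘ ⋯ ∘ Ω_{x_0,x_1}` (the identity relation when `a = b`). -/
inductive ChainComp {S : Type u} [Lattice S] (L : S → Type v)
    (Ω : ∀ x y : S, x ⋖ y → L x → L y → Prop) : ∀ a b : S, (L a → L b → Prop) → Prop
  | refl (a : S) : ChainComp L Ω a a (fun u v => u = v)
  | cons {a b c : S} (h : a ⋖ b) {f : L b → L c → Prop}
      (hf : ChainComp L Ω b c f) : ChainComp L Ω a c (Relation.Comp (Ω a b h) f)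

/-- The minimal axioms for a polytone system `(S, (L x), Ω)`:
(PS1⁻) `S` is l.f.f.c.; (PS2⁻) the blocks are finite, modular, complemented;
(PS3⁻) each connection `Ω x y h` (for a cover `x ⋖ y`) is a partial bijection
whose domain is a filter, whose image is an ideal, and which is a lattice
isomorphism; (PS6⁻∧), (PS7⁻∧), (PS8⁻∨) as in the paper. -/
def MinimalAxioms {S : Type u} [Lattice S] (L : S → Type v)
    [∀ x, Lattice (L x)] [∀ x, BoundedOrder (L x)]
    (Ω : ∀ x y : S, x ⋖ y → L x → L y → Prop) : Prop :=
  -- (PS1⁻) S is l.f.f.c.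
  (∀ a b : S, (Set.Icc a b).Finite) ∧
  (∀ a : S, {b | a ⋖ b}.Finite) ∧
  (∀ a : S, {b | b ⋖ a}.Finite) ∧
  -- (PS2⁻) blocks are f.m.c.
  (∀ x, Finite (L x)) ∧
  (∀ x, IsModularLattice (L x)) ∧
  (∀ x, ComplementedLattice (L x)) ∧
  -- (PS3⁻)
  (∀ x y : S, ∀ h : x ⋖ y, IsPartialBij (Ω x y h) ∧ IsLatFilter (rdom (Ω x y h)) ∧
    IsLatIdeal (rim (Ω x y h)) ∧ IsLatHomRel (Ω x y h)) ∧
  -- (PS6⁻∧)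
  (∀ x y : S, ∀ (hx : x ⊓ y ⋖ x) (hy : x ⊓ y ⋖ y),
    ∃ (f : L x → L (x ⊔ y) → Prop) (g : L y → L (x ⊔ y) → Prop),
      ChainComp L Ω x (x ⊔ y) f ∧ ChainComp L Ω y (x ⊔ y) g ∧
      Relation.Comp (Ω (x ⊓ y) x hx) f = Relation.Comp (Ω (x ⊓ y) y hy) g) ∧
  -- (PS7⁻∧)
  (∀ x y : S, ∀ (hx : x ⊓ y ⋖ x) (hy : x ⊓ y ⋖ y),
    ∃ h : L (x ⊓ y) → L (x ⊔ y) → Prop, ChainComp L Ω (x ⊓ y) (x ⊔ y) h ∧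
      rdom (Ω (x ⊓ y) x hx) ∩ rdom (Ω (x ⊓ y) y hy) ⊆ rdom h) ∧
  -- (PS8⁻∨)
  (∀ x y : S, ∀ (hx : x ⋖ x ⊔ y) (hy : y ⋖ x ⊔ y),
    ∃ h : L (x ⊓ y) → L (x ⊔ y) → Prop, ChainComp L Ω (x ⊓ y) (x ⊔ y) h ∧
      rim (Ω x (x ⊔ y) hx) ∩ rim (Ω y (x ⊔ y) hy) ⊆ rim h)

/-- The ordered relation ξ on `S`: `x ξ y` iff `x ≤ y` and `Φ x y` is not empty. -/
def xiRel {S : Type u} [Lattice S] {L : S → Type v}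
    (Φ : ∀ x y : S, x ≤ y → (L x → L y → Prop)) (x y : S) : Prop :=
  ∃ h : x ≤ y, ∃ u v, Φ x y h u v

section PolyAux
set_option linter.unusedSectionVars false

variable {S : Type u} [Lattice S] {L : S → Type v}
  [∀ x, Lattice (L x)] [∀ x, BoundedOrder (L x)]
  {Ω : ∀ x y : S, x ⋖ y → L x → L y → Prop}

theorem comp_eq_left' {α : Type u_1} {β : Type u_2} (r : α → β → Prop) :
    Relation.Comp (fun u v : α => u = v) r = r := by
  funext a c
  apply propext
  constructor
  · rintro ⟨b, rfl, h⟩; exact h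
  · intro h; exact ⟨a, rfl, h⟩

theorem comp_eq_right' {α : Type u_1} {β : Type u_2} (r : α → β → Prop) :
    Relation.Comp r (fun u v : β => u = v) = r := by
  funext a c
  apply propext
  constructor
  · rintro ⟨b, h, rfl⟩; exact h
  · intro h; exact ⟨c, h, rfl⟩

theorem cc_le {a b : S} {f : L a → L b → Prop} (h : ChainComp L Ω a b f) : a ≤ b := by
  induction h with
  | refl a => exact le_rfl
  | cons hab hf ih => exact hab.le.trans ih

theorem cc_append {a b : S} {f : L a → L b → Prop} (hf : ChainComp L Ω a b f) :
    ∀ {c : S} {g : L b → L c → Prop}, ChainComp L Ω b c g →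
      ChainComp L Ω a c (Relation.Comp f g) := by
  induction hf with
  | refl a =>
    intro c g hg; rw [comp_eq_left']; exact hg
  | cons h hf' ih =>
    intro c g hg; rw [Relation.comp_assoc]; exact .cons h (ih hg)

theorem cc_single {a b : S} (h : a ⋖ b) : ChainComp L Ω a b (Ω a b h) := by
  have := ChainComp.cons h (.refl b) (Ω := Ω)
  rwa [comp_eq_right'] at this

theorem exists_cover_above (hIcc : ∀ a b : S, (Set.Icc a b).Finite) {a b : S}
    (h : a < b) : ∃ c, a ⋖ c ∧ c ≤ b := by
  have hfin : (Set.Ioc a b).Finite := (hIcc a b).subset Set.Ioc_subset_Icc_self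
  obtain ⟨c, hc, hmin⟩ := Set.Finite.exists_minimalFor id _ hfin ⟨b, h, le_rfl⟩
  refine ⟨c, ⟨hc.1, fun z hz hzc => ?_⟩, hc.2⟩
  exact absurd (hmin (j := z) ⟨hz, hzc.le.trans hc.2⟩ hzc.le) hzc.not_ge

theorem exists_cover_below (hIcc : ∀ a b : S, (Set.Icc a b).Finite) {a b : S}
    (h : a < b) : ∃ c, a ≤ c ∧ c ⋖ b := by
  have hfin : (Set.Ico a b).Finite := (hIcc a b).subset Set.Ico_subset_Icc_self
  obtain ⟨c, hc, hmax⟩ := Set.Finite.exists_maximalFor id _ hfin ⟨a, le_rfl, h⟩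
  refine ⟨c, hc.1, ⟨hc.2, fun z hz hzb => ?_⟩⟩
  exact absurd (hmax (j := z) ⟨hc.1.trans hz.le, hzb⟩ hz.le) hz.not_ge

theorem cc_exists_aux (hIcc : ∀ a b : S, (Set.Icc a b).Finite) :
    ∀ (n : ℕ) (a b : S), a ≤ b → (Set.Icc a b).ncard ≤ n →
      ∃ f, ChainComp L Ω a b f := by
  intro n
  induction n with
  | zero =>
    intro a b hab hn
    have : 0 < (Set.Icc a b).ncard := (Set.ncard_pos (hIcc a b)).2 ⟨a, le_rfl, hab⟩
    omega
  | succ n ih =>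
    intro a b hab hn
    rcases eq_or_lt_of_le hab with rfl | hlt
    · exact ⟨_, .refl a⟩
    · obtain ⟨c, hac, hcb⟩ := exists_cover_above hIcc hlt
      have hss : Set.Icc c b ⊂ Set.Icc a b := by
        constructor
        · intro z hz; exact ⟨hac.le.trans hz.1, hz.2⟩
        · intro hcon
          exact absurd ((hcon ⟨le_rfl, hab⟩ : a ∈ Set.Icc c b).1) (not_le_of_gt hac.lt)
      have hlt' : (Set.Icc c b).ncard < (Set.Icc a b).ncard :=
        Set.ncard_lt_ncard hss (hIcc a b)
      obtain ⟨f, hf⟩ := ih c b hcb (by omega)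
      exact ⟨_, .cons hac hf⟩

theorem cc_exists (hIcc : ∀ a b : S, (Set.Icc a b).Finite) {a b : S} (h : a ≤ b) :
    ∃ f, ChainComp L Ω a b f :=
  cc_exists_aux hIcc (Set.Icc a b).ncard a b h le_rfl

theorem cc_func
    (hPS3 : ∀ x y : S, ∀ h : x ⋖ y, IsPartialBij (Ω x y h) ∧ IsLatFilter (rdom (Ω x y h)) ∧
      IsLatIdeal (rim (Ω x y h)) ∧ IsLatHomRel (Ω x y h))
    {a b : S} {f : L a → L b → Prop} (hcc : ChainComp L Ω a b f) :
    ∀ u v v', f u v → f u v' → v = v' := by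
  induction hcc with
  | refl a => intro u v v' h1 h2; rw [← h1, ← h2]
  | cons h hf ih =>
    rintro u v v' ⟨w, hw, hwv⟩ ⟨w', hw', hwv'⟩
    obtain rfl : w = w' := (hPS3 _ _ h).1.1 _ _ _ hw hw'
    exact ih _ _ _ hwv hwv'

theorem cc_inj
    (hPS3 : ∀ x y : S, ∀ h : x ⋖ y, IsPartialBij (Ω x y h) ∧ IsLatFilter (rdom (Ω x y h)) ∧
      IsLatIdeal (rim (Ω x y h)) ∧ IsLatHomRel (Ω x y h))
    {a b : S} {f : L a → L b → Prop} (hcc : ChainComp L Ω a b f) :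
    ∀ u u' v, f u v → f u' v → u = u' := by
  induction hcc with
  | refl a => intro u u' v h1 h2; rw [h1, h2]
  | cons h hf ih =>
    rintro u u' v ⟨w, hw, hwv⟩ ⟨w', hw', hwv'⟩
    obtain rfl : w = w' := ih _ _ _ hwv hwv'
    exact (hPS3 _ _ h).1.2 _ _ _ hw hw'

theorem cc_meet
    (hPS3 : ∀ x y : S, ∀ h : x ⋖ y, IsPartialBij (Ω x y h) ∧ IsLatFilter (rdom (Ω x y h)) ∧
      IsLatIdeal (rim (Ω x y h)) ∧ IsLatHomRel (Ω x y h))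
    {a b : S} {f : L a → L b → Prop} (hcc : ChainComp L Ω a b f) :
    ∀ u u' v v', f u v → f u' v' → f (u ⊓ u') (v ⊓ v') := by
  induction hcc with
  | refl a => intro u u' v v' h1 h2; rw [h1, h2]
  | cons h hf ih =>
    rintro u u' v v' ⟨w, hw, hwv⟩ ⟨w', hw', hwv'⟩
    exact ⟨w ⊓ w', (hPS3 _ _ h).2.2.2.2 _ _ _ _ hw hw', ih _ _ _ _ hwv hwv'⟩

theorem cc_imDown
    (hPS3 : ∀ x y : S, ∀ h : x ⋖ y, IsPartialBij (Ω x y h) ∧ IsLatFilter (rdom (Ω x y h)) ∧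
      IsLatIdeal (rim (Ω x y h)) ∧ IsLatHomRel (Ω x y h))
    {a b : S} {f : L a → L b → Prop} (hcc : ChainComp L Ω a b f) :
    ∀ u v, f u v → ∀ v', v' ≤ v → ∃ u', u' ≤ u ∧ f u' v' := by
  induction hcc with
  | refl a => intro u v h1 v' hv'; exact ⟨v', h1 ▸ hv', rfl⟩
  | cons h hf ih =>
    rintro u v ⟨w, hw, hwv⟩ v' hv'
    obtain ⟨w', hw'le, hw'⟩ := ih _ _ hwv _ hv'
    have hwim : w' ∈ rim (Ω _ _ h) :=
      (hPS3 _ _ h).2.2.1.2.1 w ⟨u, hw⟩ w' hw'le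
    obtain ⟨u0, hu0⟩ := hwim
    have hmeet : Ω _ _ h (u ⊓ u0) (w ⊓ w') := (hPS3 _ _ h).2.2.2.2 _ _ _ _ hw hu0
    rw [inf_eq_right.2 hw'le] at hmeet
    have : u0 = u ⊓ u0 := (hPS3 _ _ h).1.2 _ _ _ hu0 hmeet
    exact ⟨u0, this ▸ inf_le_left, ⟨w', hu0, hw'⟩⟩

theorem cc_uniq_aux (hmin : MinimalAxioms L Ω) :
    ∀ (n : ℕ) (a b : S) (f g : L a → L b → Prop), ChainComp L Ω a b f →
      ChainComp L Ω a b g → (Set.Icc a b).ncard ≤ n → f = g := by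
  obtain ⟨hIcc, -, -, -, -, -, hPS3, hPS6, hPS7, hPS8⟩ := hmin
  intro n
  induction n with
  | zero =>
    intro a b f g hf hg hn
    have : 0 < (Set.Icc a b).ncard := (Set.ncard_pos (hIcc a b)).2 ⟨a, le_rfl, cc_le hf⟩
    omega
  | succ n ih =>
    intro a b f g hf hg hn
    cases hf with
    | refl =>
      cases hg with
      | refl => rfl
      | cons h2 hg' => exact absurd (cc_le hg') h2.lt.not_ge
    | cons h1 hf' =>
      cases hg with
      | refl => exact absurd (cc_le hf') h1.lt.not_ge
      | cons h2 hg' =>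
        rename_i u f₁ v g₁
        by_cases huv : u = v
        · subst huv
          have hss : Set.Icc u b ⊂ Set.Icc a b := by
            constructor
            · intro z hz; exact ⟨h1.le.trans hz.1, hz.2⟩
            · intro hcon
              exact absurd ((hcon ⟨le_rfl, (cc_le hf').trans' h1.le⟩ : a ∈ Set.Icc u b).1)
                (not_le_of_gt h1.lt)
          have hcard := Set.ncard_lt_ncard hss (hIcc a b)
          rw [ih u b f₁ g₁ hf' hg' (by omega)]
        · -- distinct first steps
          have hma : u ⊓ v = a := by
            have hle : a ≤ u ⊓ v := le_inf h1.lt.le h2.lt.le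
            rcases eq_or_lt_of_le hle with he | hlt
            · exact he.symm
            · exfalso
              rcases eq_or_lt_of_le (inf_le_left : u ⊓ v ≤ u) with he1 | hlt1
              · rcases eq_or_lt_of_le (inf_le_right : u ⊓ v ≤ v) with he2 | hlt2
                · exact huv (he1.symm.trans he2)
                · exact h2.2 hlt hlt2
              · exact h1.2 hlt hlt1
          subst hma
          obtain ⟨p, q, hp, hq, heq⟩ := hPS6 u v h1 h2
          have hub : u ≤ b := cc_le hf'
          have hvb : v ≤ b := cc_le hg'
          obtain ⟨r, hr⟩ := cc_exists (Ω := Ω) hIcc (sup_le hub hvb)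
          have hssu : Set.Icc u b ⊂ Set.Icc (u ⊓ v) b := by
            constructor
            · intro z hz; exact ⟨inf_le_left.trans hz.1, hz.2⟩
            · intro hcon
              exact absurd ((hcon ⟨le_rfl, inf_le_left.trans hub⟩ : u ⊓ v ∈ Set.Icc u b).1)
                (not_le_of_gt h1.lt)
          have hssv : Set.Icc v b ⊂ Set.Icc (u ⊓ v) b := by
            constructor
            · intro z hz; exact ⟨inf_le_right.trans hz.1, hz.2⟩
            · intro hcon
              exact absurd ((hcon ⟨le_rfl, inf_le_left.trans hub⟩ : u ⊓ v ∈ Set.Icc v b).1)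
                (not_le_of_gt h2.lt)
          have hcu := Set.ncard_lt_ncard hssu (hIcc _ b)
          have hcv := Set.ncard_lt_ncard hssv (hIcc _ b)
          have e1 : f₁ = Relation.Comp p r := ih u b _ _ hf' (cc_append hp hr) (by omega)
          have e2 : g₁ = Relation.Comp q r := ih v b _ _ hg' (cc_append hq hr) (by omega)
          calc Relation.Comp (Ω (u ⊓ v) u h1) f₁
              = Relation.Comp (Relation.Comp (Ω (u ⊓ v) u h1) p) r := by
                rw [e1, Relation.comp_assoc]
            _ = Relation.Comp (Relation.Comp (Ω (u ⊓ v) v h2) q) r := by rw [heq]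
            _ = Relation.Comp (Ω (u ⊓ v) v h2) g₁ := by rw [Relation.comp_assoc, ← e2]

theorem cc_uniq (hmin : MinimalAxioms L Ω) {a b : S} {f g : L a → L b → Prop}
    (hf : ChainComp L Ω a b f) (hg : ChainComp L Ω a b g) : f = g :=
  cc_uniq_aux hmin (Set.Icc a b).ncard a b f g hf hg le_rfl
/-- `z` lies in the image of the (well-defined) composite relation from `a` to `b`. -/
def RimMem (Om : ∀ x y : S, x ⋖ y → L x → L y → Prop) (a b : S) (z : L b) : Prop :=
  ∃ f, ChainComp L Om a b f ∧ z ∈ rim f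

/-- The composite relation from `a` to `b` is nonempty. -/
def XiNE (Om : ∀ x y : S, x ⋖ y → L x → L y → Prop) (a b : S) : Prop :=
  ∃ f, ChainComp L Om a b f ∧ ∃ u v, f u v

theorem rimMem_iff (hmin : MinimalAxioms L Ω) {a b : S} {f : L a → L b → Prop}
    (hf : ChainComp L Ω a b f) {z : L b} : z ∈ rim f ↔ RimMem Ω a b z := by
  constructor
  · intro h; exact ⟨f, hf, h⟩
  · rintro ⟨g, hg, hz⟩
    rw [cc_uniq hmin hf hg]; exact hz

theorem rim_pull (hmin : MinimalAxioms L Ω) {u w1 j : S} (huw : u ≤ w1) (hc : w1 ⋖ j)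
    {z : L j} (hz : RimMem Ω u j z) :
    ∃ zt, Ω w1 j hc zt z ∧ RimMem Ω u w1 zt := by
  obtain ⟨f, hf, a0, ha0⟩ := hz
  obtain ⟨f1, hf1⟩ := cc_exists (Ω := Ω) hmin.1 huw
  have he : f = Relation.Comp f1 (Ω w1 j hc) := cc_uniq hmin hf (cc_append hf1 (cc_single hc))
  rw [he] at ha0
  obtain ⟨zt, hzt, hΩ⟩ := ha0
  exact ⟨zt, hΩ, f1, hf1, a0, hzt⟩

theorem rim_push {u w1 j : S} (hc : w1 ⋖ j) {zt : L w1} {z : L j}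
    (hΩ : Ω w1 j hc zt z) (hz : RimMem Ω u w1 zt) : RimMem Ω u j z := by
  obtain ⟨f1, hf1, a0, ha0⟩ := hz
  exact ⟨_, cc_append hf1 (cc_single hc), a0, zt, ha0, hΩ⟩

theorem gp8_aux (hmin : MinimalAxioms L Ω) :
    ∀ (n : ℕ) (m u v j : S), m = u ⊓ v → u ≤ j → v ≤ j →
      (Set.Icc m j).ncard ≤ n → ∀ z : L j,
      RimMem Ω u j z → RimMem Ω v j z → RimMem Ω m j z := by
  intro n
  induction n with
  | zero =>
    intro m u v j hm huj hvj hn z _ _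
    have hmj : m ≤ j := hm ▸ (inf_le_left.trans huj)
    have : 0 < (Set.Icc m j).ncard := (Set.ncard_pos (hmin.1 m j)).2 ⟨m, le_rfl, hmj⟩
    omega
  | succ n ih =>
    intro m u v j hm huj hvj hn z hzu hzv
    by_cases huv : u ≤ v
    · have he : m = u := by rw [hm]; exact inf_eq_left.2 huv
      subst he; exact hzu
    by_cases hvu : v ≤ u
    · have he : m = v := by rw [hm]; exact inf_eq_right.2 hvu
      subst he; exact hzv
    have huj' : u < j := lt_of_le_of_ne huj (fun e => hvu (e ▸ hvj))
    have hvj' : v < j := lt_of_le_of_ne hvj (fun e => huv (e ▸ huj))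
    have hmu : m ≤ u := hm ▸ inf_le_left
    have hmv : m ≤ v := hm ▸ inf_le_right
    by_cases hj : u ⊔ v = j
    · -- the join of u and v is j itself
      obtain ⟨u1, hu1, hcu1⟩ := exists_cover_below hmin.1 huj'
      obtain ⟨v1, hv1, hcv1⟩ := exists_cover_below hmin.1 hvj'
      have hv1u1 : ¬ v1 ≤ u1 := by
        intro hle
        rcases eq_or_lt_of_le hle with he | hlt
        · exact absurd (hj ▸ sup_le (he ▸ hu1 : u ≤ u1) (hv1.trans hle)) hcu1.lt.not_ge
        · exact hcv1.2 hlt hcu1.lt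
      have hsup : u1 ⊔ v1 = j := by
        rcases eq_or_lt_of_le (sup_le hcu1.lt.le hcv1.lt.le : u1 ⊔ v1 ≤ j) with he | hlt
        · exact he
        · exact absurd hlt (hcu1.2 (lt_of_le_of_ne le_sup_left
            (fun e => hv1u1 (e ▸ le_sup_right)))).elim
      subst hsup
      -- z is in the image of both single-step connections
      obtain ⟨ztu, hΩu, hru⟩ := rim_pull hmin hu1 hcu1 hzu
      obtain ⟨ztv, hΩv, hrv⟩ := rim_pull hmin hv1 hcv1 hzv
      obtain ⟨h0, hch0, hsub⟩ := hmin.2.2.2.2.2.2.2.2.2 u1 v1 hcu1 hcv1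
      have hz0 : z ∈ rim h0 := hsub ⟨⟨ztu, hΩu⟩, ⟨ztv, hΩv⟩⟩
      have hzw : RimMem Ω (u1 ⊓ v1) (u1 ⊔ v1) z := ⟨h0, hch0, hz0⟩
      have hmw : m ≤ u1 ⊓ v1 := le_inf (hmu.trans hu1) (hmv.trans hv1)
      have hstepu : RimMem Ω (u ⊓ (u1 ⊓ v1)) (u1 ⊔ v1) z := by
        obtain ⟨zt, hO1, hru'⟩ := rim_pull hmin hu1 hcu1 hzu
        obtain ⟨zt', hO2, hrw'⟩ := rim_pull hmin inf_le_left hcu1 hzw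
        obtain rfl : zt = zt' := (hmin.2.2.2.2.2.2.1 _ _ hcu1).1.2 _ _ _ hO1 hO2
        have hss : Set.Icc (u ⊓ (u1 ⊓ v1)) u1 ⊂ Set.Icc m (u1 ⊔ v1) := by
          constructor
          · intro x hx; exact ⟨(le_inf hmu hmw).trans hx.1, hx.2.trans hcu1.lt.le⟩
          · intro hcon
            exact absurd ((hcon ⟨hmu.trans huj, le_rfl⟩ : u1 ⊔ v1 ∈ Set.Icc _ u1).2)
              hcu1.lt.not_ge
        have hcard := Set.ncard_lt_ncard hss (hmin.1 _ _)
        have hrec := ih (u ⊓ (u1 ⊓ v1)) u (u1 ⊓ v1) u1 rfl hu1 inf_le_left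
          (by omega) zt hru' hrw'
        exact rim_push hcu1 hO1 hrec
      have hstepv : RimMem Ω (v ⊓ (u1 ⊓ v1)) (u1 ⊔ v1) z := by
        obtain ⟨zt, hO1, hrv'⟩ := rim_pull hmin hv1 hcv1 hzv
        obtain ⟨zt', hO2, hrw'⟩ := rim_pull hmin inf_le_right hcv1 hzw
        obtain rfl : zt = zt' := (hmin.2.2.2.2.2.2.1 _ _ hcv1).1.2 _ _ _ hO1 hO2
        have hss : Set.Icc (v ⊓ (u1 ⊓ v1)) v1 ⊂ Set.Icc m (u1 ⊔ v1) := by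
          constructor
          · intro x hx; exact ⟨(le_inf hmv hmw).trans hx.1, hx.2.trans hcv1.lt.le⟩
          · intro hcon
            exact absurd ((hcon ⟨hmu.trans huj, le_rfl⟩ : u1 ⊔ v1 ∈ Set.Icc _ v1).2)
              hcv1.lt.not_ge
        have hcard := Set.ncard_lt_ncard hss (hmin.1 _ _)
        have hrec := ih (v ⊓ (u1 ⊓ v1)) v (u1 ⊓ v1) v1 rfl hv1 inf_le_right
          (by omega) zt hrv' hrw'
        exact rim_push hcv1 hO1 hrec
      have hpqlt : (u ⊓ (u1 ⊓ v1)) ⊔ (v ⊓ (u1 ⊓ v1)) < u1 ⊔ v1 :=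
        lt_of_le_of_lt (sup_le (inf_le_right.trans inf_le_left)
          (inf_le_right.trans inf_le_left)) hcu1.lt
      obtain ⟨w2, hle2, hcw2⟩ := exists_cover_below hmin.1 hpqlt
      obtain ⟨zt, hO1, hru'⟩ := rim_pull hmin (le_sup_left.trans hle2) hcw2 hstepu
      obtain ⟨zt', hO2, hrv'⟩ := rim_pull hmin (le_sup_right.trans hle2) hcw2 hstepv
      obtain rfl : zt = zt' := (hmin.2.2.2.2.2.2.1 _ _ hcw2).1.2 _ _ _ hO1 hO2
      have hme : m = (u ⊓ (u1 ⊓ v1)) ⊓ (v ⊓ (u1 ⊓ v1)) := by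
        apply le_antisymm
        · exact le_inf (le_inf hmu hmw) (le_inf hmv hmw)
        · rw [hm]; exact le_inf (inf_le_left.trans inf_le_left)
            (inf_le_right.trans inf_le_left)
      have hss : Set.Icc m w2 ⊂ Set.Icc m (u1 ⊔ v1) := by
        constructor
        · intro x hx; exact ⟨hx.1, hx.2.trans hcw2.lt.le⟩
        · intro hcon
          exact absurd ((hcon ⟨hmu.trans huj, le_rfl⟩ : u1 ⊔ v1 ∈ Set.Icc m w2).2)
            hcw2.lt.not_ge
      have hcard := Set.ncard_lt_ncard hss (hmin.1 _ _)
      have hrec := ih m _ _ w2 hme (le_sup_left.trans hle2) (le_sup_right.trans hle2)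
        (by omega) zt hru' hrv'
      exact rim_push hcw2 hO1 hrec
    · -- u ⊔ v < j : pull back through a coatom above u ⊔ v
      have hlt : u ⊔ v < j := lt_of_le_of_ne (sup_le huj hvj) hj
      obtain ⟨w1, hle, hcw1⟩ := exists_cover_below hmin.1 hlt
      obtain ⟨zt, hΩ, hru⟩ := rim_pull hmin (le_sup_left.trans hle) hcw1 hzu
      obtain ⟨zt', hΩ', hrv⟩ := rim_pull hmin (le_sup_right.trans hle) hcw1 hzv
      obtain rfl : zt = zt' := (hmin.2.2.2.2.2.2.1 _ _ hcw1).1.2 _ _ _ hΩ hΩ'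
      have hss : Set.Icc m w1 ⊂ Set.Icc m j := by
        constructor
        · intro x hx; exact ⟨hx.1, hx.2.trans hcw1.lt.le⟩
        · intro hcon
          exact absurd ((hcon ⟨hmu.trans huj, le_rfl⟩ : j ∈ Set.Icc m w1).2)
            hcw1.lt.not_ge
      have hcard := Set.ncard_lt_ncard hss (hmin.1 m j)
      have hrec := ih m u v w1 hm (le_sup_left.trans hle) (le_sup_right.trans hle)
        (by omega) zt hru hrv
      exact rim_push hcw1 hΩ hrec
theorem gp8 (hmin : MinimalAxioms L Ω) {u v j : S} (huj : u ≤ j) (hvj : v ≤ j) {z : L j}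
    (h1 : RimMem Ω u j z) (h2 : RimMem Ω v j z) : RimMem Ω (u ⊓ v) j z :=
  gp8_aux hmin (Set.Icc (u ⊓ v) j).ncard (u ⊓ v) u v j rfl huj hvj le_rfl z h1 h2

theorem xi_restrict (hmin : MinimalAxioms L Ω) {a b c : S} (hab : XiNE Ω a b)
    (hac : a ≤ c) (hcb : c ≤ b) : XiNE Ω a c := by
  obtain ⟨f, hf, x, y, hxy⟩ := hab
  obtain ⟨f1, hf1⟩ := cc_exists (Ω := Ω) hmin.1 hac
  obtain ⟨f2, hf2⟩ := cc_exists (Ω := Ω) hmin.1 hcb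
  rw [cc_uniq hmin hf (cc_append hf1 hf2)] at hxy
  obtain ⟨w, hw, -⟩ := hxy
  exact ⟨f1, hf1, x, w, hw⟩

theorem xi_single (hmin : MinimalAxioms L Ω) {a b : S} (h : a ⋖ b) : XiNE Ω a b := by
  obtain ⟨x, w, hw⟩ := (hmin.2.2.2.2.2.2.1 a b h).2.1.1
  exact ⟨_, cc_single h, x, w, hw⟩

theorem xi_inf_common_target (hmin : MinimalAxioms L Ω) {p q t : S} (hpt : p ≤ t)
    (hqt : q ≤ t) (h1 : XiNE Ω p t) (h2 : XiNE Ω q t) : XiNE Ω (p ⊓ q) t := by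
  have hPS3 := hmin.2.2.2.2.2.2.1
  obtain ⟨cp, hcp⟩ := cc_exists (Ω := Ω) hmin.1 (le_sup_left : p ≤ p ⊔ q)
  obtain ⟨cq, hcq⟩ := cc_exists (Ω := Ω) hmin.1 (le_sup_right : q ≤ p ⊔ q)
  obtain ⟨cj, hcj⟩ := cc_exists (Ω := Ω) hmin.1 (sup_le hpt hqt)
  obtain ⟨f, hf, a1, z1, hfz⟩ := h1
  rw [cc_uniq hmin hf (cc_append hcp hcj)] at hfz
  obtain ⟨w, hw, hwz⟩ := hfz
  obtain ⟨g, hg, a2, z2, hgz⟩ := h2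
  rw [cc_uniq hmin hg (cc_append hcq hcj)] at hgz
  obtain ⟨w', hw', hwz'⟩ := hgz
  obtain ⟨a3, -, ha3⟩ := cc_imDown hPS3 hcp a1 w hw (w ⊓ w') inf_le_left
  obtain ⟨a4, -, ha4⟩ := cc_imDown hPS3 hcq a2 w' hw' (w ⊓ w') inf_le_right
  have hr1 : RimMem Ω p (p ⊔ q) (w ⊓ w') := ⟨cp, hcp, a3, ha3⟩
  have hr2 : RimMem Ω q (p ⊔ q) (w ⊓ w') := ⟨cq, hcq, a4, ha4⟩
  obtain ⟨cm, hcm, s, hs⟩ := gp8 hmin le_sup_left le_sup_right hr1 hr2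
  have hmeet := cc_meet hPS3 hcj w w' z1 z2 hwz hwz'
  exact ⟨_, cc_append hcm hcj, s, z1 ⊓ z2, w ⊓ w', hs, hmeet⟩

theorem xi_inf_cov (hmin : MinimalAxioms L Ω) {p c c' : S} (hpc' : p ≤ c') (hc : c ⋖ c')
    (hp : XiNE Ω p c') : XiNE Ω (p ⊓ c) c := by
  by_cases hpc : p ≤ c
  · rw [inf_eq_left.2 hpc]
    exact xi_restrict hmin hp hpc hc.le
  · have h2 := xi_inf_common_target hmin hpc' hc.le hp (xi_single hmin hc)
    exact xi_restrict hmin h2 inf_le_right hc.le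

theorem xi_inf_right_aux (hmin : MinimalAxioms L Ω) : ∀ (n : ℕ) (a b c : S), a ≤ b → c ≤ b →
    (Set.Icc c b).ncard ≤ n → XiNE Ω a b → XiNE Ω (a ⊓ c) c := by
  intro n
  induction n with
  | zero =>
    intro a b c hab hcb hn _
    have : 0 < (Set.Icc c b).ncard := (Set.ncard_pos (hmin.1 c b)).2 ⟨c, le_rfl, hcb⟩
    omega
  | succ n ih =>
    intro a b c hab hcb hn hxi
    rcases eq_or_lt_of_le hcb with rfl | hlt
    · rw [inf_eq_left.2 hab]; exact hxi
    · obtain ⟨c', hcc', hc'b⟩ := exists_cover_above hmin.1 hlt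
      have hss : Set.Icc c' b ⊂ Set.Icc c b :=
        ⟨fun z hz => ⟨hcc'.le.trans hz.1, hz.2⟩,
          fun hcon => absurd ((hcon ⟨le_rfl, hcb⟩ : c ∈ Set.Icc c' b).1)
            (not_le_of_gt hcc'.lt)⟩
      have hcard := Set.ncard_lt_ncard hss (hmin.1 c b)
      have ih' := ih a b c' hab hc'b (by omega) hxi
      have h2 := xi_inf_cov hmin inf_le_right hcc' ih'
      have he : (a ⊓ c') ⊓ c = a ⊓ c := by
        apply le_antisymm
        · exact le_inf (inf_le_left.trans inf_le_left) inf_le_right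
        · exact le_inf (le_inf inf_le_left (inf_le_right.trans hcc'.le)) inf_le_right
      rwa [he] at h2

theorem xi_inf_right (hmin : MinimalAxioms L Ω) {a b c : S} (hab : a ≤ b) (hcb : c ≤ b)
    (h : XiNE Ω a b) : XiNE Ω (a ⊓ c) c :=
  xi_inf_right_aux hmin (Set.Icc c b).ncard a b c hab hcb le_rfl h

end PolyAux
theorem xi_meet_two {S : Type u} [Lattice S] (L : S → Type v)
    [∀ x, Lattice (L x)] [∀ x, BoundedOrder (L x)]
    (Ω : ∀ x y : S, x ⋖ y → L x → L y → Prop)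
    (hmin : MinimalAxioms L Ω)
    (Φ : ∀ x y : S, x ≤ y → (L x → L y → Prop))
    (hΦ : ∀ x y : S, ∀ h : x ≤ y, ChainComp L Ω x y (Φ x y h)) :
    ∀ x x' y y' : S, xiRel Φ x x' → xiRel Φ y y' →
      xiRel Φ (x ⊓ y) (x' ⊓ y') := by
  intro x x' y y' hx hy
  obtain ⟨hxx, u, v, hu⟩ := hx
  obtain ⟨hyy, u', v', hu'⟩ := hy
  have hX : XiNE Ω x x' := ⟨Φ x x' hxx, hΦ x x' hxx, u, v, hu⟩
  have hY : XiNE Ω y y' := ⟨Φ y y' hyy, hΦ y y' hyy, u', v', hu'⟩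
  have h1 : XiNE Ω (x ⊓ (x' ⊓ y')) (x' ⊓ y') := xi_inf_right hmin hxx inf_le_left hX
  have h2 : XiNE Ω (y ⊓ (x' ⊓ y')) (x' ⊓ y') := xi_inf_right hmin hyy inf_le_right hY
  have h3 := xi_inf_common_target hmin inf_le_right inf_le_right h1 h2
  have he : (x ⊓ (x' ⊓ y')) ⊓ (y ⊓ (x' ⊓ y')) = x ⊓ y := by
    apply le_antisymm
    · exact le_inf (inf_le_left.trans inf_le_left) (inf_le_right.trans inf_le_left)
    · exact le_inf
        (le_inf inf_le_left (le_inf (inf_le_left.trans hxx) (inf_le_right.trans hyy)))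
        (le_inf inf_le_right (le_inf (inf_le_left.trans hxx) (inf_le_right.trans hyy)))
  rw [he] at h3
  obtain ⟨f, hf, s, z, hs⟩ := h3
  refine ⟨inf_le_inf hxx hyy, s, z, ?_⟩
  rw [cc_uniq hmin (hΦ _ _ (inf_le_inf hxx hyy)) hf]
  exact hs
end

section
/- In a system (S, (L_x), (Ω_{x,y})) satisfying the minimal axioms, the relation ξ is an ordered tolerance on S, and the relation γ defined by x γ y iff (x ∧ y) ξ (x ∨ y) is a tolerance on S. -/
def IsTolerance {L : Type u} [Lattice L] (ξ : L → L → Prop) : Prop :=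
  (∀ x, ξ x x) ∧ (∀ x y, ξ x y → ξ y x) ∧
  (∀ a b c d, ξ a b → ξ c d → ξ (a ⊔ c) (b ⊔ d)) ∧
  (∀ a b c d, ξ a b → ξ c d → ξ (a ⊓ c) (b ⊓ d))

def IsOrderedTolerance {L : Type u} [Lattice L] (ρ : L → L → Prop) : Prop :=
  (∀ x y, ρ x y → x ≤ y) ∧ (∀ x, ρ x x) ∧
  (∀ x x' y y', ρ x x' → ρ y y' → ρ (x ⊓ y) (x' ⊓ y')) ∧
  (∀ x x' y y', ρ x x' → ρ y y' → ρ (x ⊔ y) (x' ⊔ y'))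

namespace PT

universe u v

variable {S : Type u} [Lattice S]

theorem exists_covby_le {a b : S} (hfin : (Set.Icc a b).Finite) (hlt : a < b) :
    ∃ t, a ⋖ t ∧ t ≤ b := by
  have hfin' : (Set.Ioc a b).Finite := hfin.subset Set.Ioc_subset_Icc_self
  have hne : hfin'.toFinset.Nonempty := by
    rw [Set.Finite.toFinset_nonempty]; exact ⟨b, hlt, le_rfl⟩
  obtain ⟨m, hm, hmin⟩ := hfin'.toFinset.exists_minimal hne
  rw [Set.Finite.mem_toFinset] at hm
  refine ⟨m, ⟨hm.1, fun c hc1 hc2 => ?_⟩, hm.2⟩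
  exact hc2.not_ge (hmin (by show c ∈ hfin'.toFinset; rw [Set.Finite.mem_toFinset]; exact ⟨hc1, hc2.le.trans hm.2⟩) hc2.le)

theorem exists_min_infClosed {A : Type v} [Lattice A] {D : Set A} (hfin : D.Finite)
    (hne : D.Nonempty) (hinf : ∀ a ∈ D, ∀ b ∈ D, a ⊓ b ∈ D) :
    ∃ d ∈ D, ∀ a ∈ D, d ≤ a := by
  have hne' : hfin.toFinset.Nonempty := by rwa [Set.Finite.toFinset_nonempty]
  have key : ∀ s : Finset A, ∀ h : s.Nonempty, (∀ x ∈ s, x ∈ D) → s.inf' h id ∈ D := by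
    intro s h
    induction h using Finset.Nonempty.cons_induction with
    | singleton a => intro hsub; simpa using hsub a (by simp)
    | cons a s ha hs ih =>
        intro hsub
        rw [Finset.inf'_cons hs]
        exact hinf a (hsub a (by simp)) _ (ih (fun x hx => hsub x (by simp [hx])))
  exact ⟨_, key _ hne' (fun x hx => (Set.Finite.mem_toFinset hfin).1 hx),
    fun a ha => Finset.inf'_le id ((Set.Finite.mem_toFinset hfin).2 ha)⟩

theorem icc_card_lt (hfin : ∀ a b : S, (Set.Icc a b).Finite) {a t q r : S}
    (hat : a < t) (hqr : q ≤ r) (har : a ≤ r) :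
    ((hfin t q).toFinset.card) < ((hfin a r).toFinset.card) := by
  apply Finset.card_lt_card
  constructor
  · intro x hx
    rw [Set.Finite.mem_toFinset] at hx ⊢
    exact ⟨hat.le.trans hx.1, hx.2.trans hqr⟩
  · intro hsub
    have := hsub (by rw [Set.Finite.mem_toFinset]; exact ⟨le_rfl, har⟩ :
      a ∈ (hfin a r).toFinset)
    rw [Set.Finite.mem_toFinset] at this
    exact absurd this.1 hat.not_ge

variable {L : S → Type v}
variable (Ω : ∀ x y : S, x ⋖ y → L x → L y → Prop)

/-- Saturated chains in `S`. -/
inductive SChain : S → S → Type u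
  | refl (a : S) : SChain a a
  | cons {a b c : S} (h : a ⋖ b) (t : SChain b c) : SChain a c

def SChain.append : ∀ {a b c : S}, SChain a b → SChain b c → SChain a c
  | _, _, _, .refl _, t => t
  | _, _, _, .cons h s, t => .cons h (s.append t)

theorem SChain.le : ∀ {a b : S}, SChain a b → a ≤ b
  | _, _, .refl _ => le_rfl
  | _, _, .cons h s => h.le.trans s.le

theorem schain_nonempty (hfin : ∀ a b : S, (Set.Icc a b).Finite) :
    ∀ (n : ℕ) (a b : S), (hfin a b).toFinset.card ≤ n → a ≤ b → Nonempty (SChain a b) := by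
  intro n
  induction n with
  | zero =>
      intro a b hc hab
      exfalso
      have : a ∈ (hfin a b).toFinset := by rw [Set.Finite.mem_toFinset]; exact ⟨le_rfl, hab⟩
      have := Finset.card_pos.2 ⟨a, this⟩
      omega
  | succ n ih =>
      intro a b hc hab
      rcases eq_or_lt_of_le hab with rfl | hlt
      · exact ⟨.refl a⟩
      · obtain ⟨t, hat, htb⟩ := exists_covby_le (hfin a b) hlt
        have hcard : (hfin t b).toFinset.card < (hfin a b).toFinset.card :=
          icc_card_lt hfin hat.lt le_rfl hab
        obtain ⟨s⟩ := ih t b (by omega) htb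
        exact ⟨.cons hat s⟩

theorem schain_exists (hfin : ∀ a b : S, (Set.Icc a b).Finite) {a b : S} (hab : a ≤ b) :
    Nonempty (SChain a b) :=
  schain_nonempty hfin _ a b le_rfl hab

end PT

namespace PT
universe u v
variable {S : Type u} [Lattice S] {L : S → Type v}
variable {Ω : ∀ x y : S, x ⋖ y → L x → L y → Prop}

theorem cc_le {a b : S} {f : L a → L b → Prop} (hf : ChainComp L Ω a b f) : a ≤ b := by
  induction hf with
  | refl => exact le_rfl
  | cons h _ ih => exact h.le.trans ih

theorem cc_append : ∀ {a b : S} {f : L a → L b → Prop}, ChainComp L Ω a b f →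
    ∀ {c : S} {g : L b → L c → Prop}, ChainComp L Ω b c g →
    ChainComp L Ω a c (Relation.Comp f g) := by
  intro a b f hf
  induction hf with
  | refl => intro c g hg; rwa [Relation.eq_comp]
  | cons h hf ih => intro c g hg; rw [Relation.comp_assoc]; exact .cons h (ih hg)

theorem cc_single {a b : S} (h : a ⋖ b) : ChainComp L Ω a b (Ω a b h) := by
  have := ChainComp.cons (L := L) (Ω := Ω) h (.refl b)
  rwa [Relation.comp_eq] at this

theorem cc_self {a : S} {f : L a → L a → Prop} (hf : ChainComp L Ω a a f) :
    f = fun u v => u = v := by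
  cases hf with
  | refl => rfl
  | cons h hf => exact absurd (cc_le hf) h.lt.not_ge

def phiOf (Ω : ∀ x y : S, x ⋖ y → L x → L y → Prop) :
    ∀ {a b : S}, SChain a b → (L a → L b → Prop)
  | _, _, .refl _ => fun u v => u = v
  | _, _, .cons h s => Relation.Comp (Ω _ _ h) (phiOf Ω s)

theorem cc_phiOf {a b : S} (ch : SChain a b) : ChainComp L Ω a b (phiOf Ω ch) := by
  induction ch with
  | refl => exact .refl _
  | cons h s ih => exact .cons h ih

theorem phiOf_append {a b c : S} (ch1 : SChain a b) (ch2 : SChain b c) :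
    phiOf Ω (ch1.append ch2) = Relation.Comp (phiOf Ω ch1) (phiOf Ω ch2) := by
  induction ch1 with
  | refl => show phiOf Ω ch2 = Relation.Comp (fun u v => u = v) (phiOf Ω ch2); rw [Relation.eq_comp]
  | cons h s ih =>
      show phiOf Ω (.cons h (s.append ch2)) = _
      show Relation.Comp (Ω _ _ h) (phiOf Ω (s.append ch2)) = _
      rw [ih, ← Relation.comp_assoc]
      rfl

end PT

namespace PT
universe u v

structure Core (S : Type u) [Lattice S] (L : S → Type v)
    [∀ x, Lattice (L x)] [∀ x, BoundedOrder (L x)] where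
  conn : ∀ x y : S, x ⋖ y → L x → L y → Prop
  icc_fin : ∀ a b : S, (Set.Icc a b).Finite
  blk_fin : ∀ x : S, Finite (L x)
  func : ∀ {x y : S} (h : x ⋖ y) (a : L x) (b b' : L y),
    conn x y h a b → conn x y h a b' → b = b'
  inj : ∀ {x y : S} (h : x ⋖ y) (a a' : L x) (b : L y),
    conn x y h a b → conn x y h a' b → a = a'
  dom_ne : ∀ {x y : S} (h : x ⋖ y), (rdom (conn x y h)).Nonempty
  dom_up : ∀ {x y : S} (h : x ⋖ y) (a a' : L x),
    a ∈ rdom (conn x y h) → a ≤ a' → a' ∈ rdom (conn x y h)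
  dom_inf : ∀ {x y : S} (h : x ⋖ y) (a a' : L x),
    a ∈ rdom (conn x y h) → a' ∈ rdom (conn x y h) → a ⊓ a' ∈ rdom (conn x y h)
  im_down : ∀ {x y : S} (h : x ⋖ y) (b b' : L y),
    b ∈ rim (conn x y h) → b' ≤ b → b' ∈ rim (conn x y h)
  im_sup : ∀ {x y : S} (h : x ⋖ y) (b b' : L y),
    b ∈ rim (conn x y h) → b' ∈ rim (conn x y h) → b ⊔ b' ∈ rim (conn x y h)
  hom_sup : ∀ {x y : S} (h : x ⋖ y) (a a' : L x) (b b' : L y),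
    conn x y h a b → conn x y h a' b' → conn x y h (a ⊔ a') (b ⊔ b')
  hom_inf : ∀ {x y : S} (h : x ⋖ y) (a a' : L x) (b b' : L y),
    conn x y h a b → conn x y h a' b' → conn x y h (a ⊓ a') (b ⊓ b')
  indep : ∀ {a b : S} (f g : L a → L b → Prop),
    ChainComp L conn a b f → ChainComp L conn a b g → f = g
  ps7 : ∀ {a t w : S} (ht : a ⋖ t) (hw : a ⋖ w), t ≠ w →
    ∀ f : L a → L (t ⊔ w) → Prop, ChainComp L conn a (t ⊔ w) f →
    ∀ u : L a, u ∈ rdom (conn a t ht) → u ∈ rdom (conn a w hw) → u ∈ rdom f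
  ps8 : ∀ {a t w : S} (ht : t ⋖ a) (hw : w ⋖ a), t ≠ w →
    ∀ f : L (t ⊓ w) → L a → Prop, ChainComp L conn (t ⊓ w) a f →
    ∀ z : L a, z ∈ rim (conn t a ht) → z ∈ rim (conn w a hw) → z ∈ rim f

namespace Core

variable {S : Type u} [Lattice S] {L : S → Type v}
    [∀ x, Lattice (L x)] [∀ x, BoundedOrder (L x)] (P : Core S L)

theorem conn_mono {x y : S} (h : x ⋖ y) {a a' : L x} {b b' : L y}
    (hb : P.conn x y h a b) (hb' : P.conn x y h a' b') (haa : a ≤ a') : b ≤ b' := by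
  have h1 : P.conn x y h (a ⊔ a') (b ⊔ b') := P.hom_sup h _ _ _ _ hb hb'
  rw [sup_eq_right.2 haa] at h1
  have := P.func h _ _ _ hb' h1
  rw [this]; exact le_sup_left

theorem cc_func : ∀ {a b : S} {f : L a → L b → Prop}, ChainComp L P.conn a b f →
    ∀ (u : L a) (v v' : L b), f u v → f u v' → v = v' := by
  intro a b f hf
  induction hf with
  | refl => intro u v v' h1 h2; rw [← h1, ← h2]
  | cons h hf ih =>
      rintro u v v' ⟨p, hp, hpv⟩ ⟨q, hq, hqv⟩
      rw [P.func h u p q hp hq] at hpv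
      exact ih q v v' hpv hqv

theorem cc_mono : ∀ {a b : S} {f : L a → L b → Prop}, ChainComp L P.conn a b f →
    ∀ {u u' : L a} {v v' : L b}, f u v → f u' v' → u ≤ u' → v ≤ v' := by
  intro a b f hf
  induction hf with
  | refl => intro u u' v v' h1 h2 hle; rw [← h1, ← h2]; exact hle
  | cons h hf ih =>
      rintro u u' v v' ⟨p, hp, hpv⟩ ⟨q, hq, hqv⟩ hle
      exact ih hpv hqv (P.conn_mono h hp hq hle)

theorem cc_dom_up : ∀ {a b : S} {f : L a → L b → Prop}, ChainComp L P.conn a b f →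
    ∀ {u u' : L a}, u ∈ rdom f → u ≤ u' → u' ∈ rdom f := by
  intro a b f hf
  induction hf with
  | refl => intro u u' _ _; exact ⟨u', rfl⟩
  | cons h hf ih =>
      rintro u u' ⟨v, p, hp, hpv⟩ hle
      obtain ⟨q, hq⟩ := P.dom_up h u u' ⟨p, hp⟩ hle
      obtain ⟨w, hw⟩ := ih ⟨v, hpv⟩ (P.conn_mono h hp hq hle)
      exact ⟨w, q, hq, hw⟩

theorem phi_eq {a b : S} (ch ch' : SChain a b) :
    phiOf P.conn ch = phiOf P.conn ch' :=
  P.indep _ _ (cc_phiOf ch) (cc_phiOf ch')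

theorem exists_dmin {x y : S} (h : x ⋖ y) :
    ∃ d ∈ rdom (P.conn x y h), ∀ a ∈ rdom (P.conn x y h), d ≤ a := by
  haveI := P.blk_fin x
  exact exists_min_infClosed (Set.toFinite _) (P.dom_ne h)
    (fun a ha b hb => P.dom_inf h a b ha hb)

noncomputable def dmin {x y : S} (h : x ⋖ y) : L x := (P.exists_dmin h).choose

theorem dmin_mem {x y : S} (h : x ⋖ y) : P.dmin h ∈ rdom (P.conn x y h) :=
  (P.exists_dmin h).choose_spec.1

theorem dmin_le {x y : S} (h : x ⋖ y) {a : L x} (ha : a ∈ rdom (P.conn x y h)) :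
    P.dmin h ≤ a :=
  (P.exists_dmin h).choose_spec.2 a ha

/-- The total saturated push along a covering `x ⋖ y`. -/
noncomputable def pi {x y : S} (h : x ⋖ y) : L x → L y → Prop :=
  fun u v => P.conn x y h (u ⊔ P.dmin h) v

theorem pi_total {x y : S} (h : x ⋖ y) (u : L x) : ∃ v, P.pi h u v :=
  P.dom_up h _ _ (P.dmin_mem h) le_sup_right

theorem pi_func {x y : S} (h : x ⋖ y) {u : L x} {v v' : L y}
    (h1 : P.pi h u v) (h2 : P.pi h u v') : v = v' :=
  P.func h _ _ _ h1 h2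

theorem pi_mono {x y : S} (h : x ⋖ y) {u u' : L x} {v v' : L y}
    (h1 : P.pi h u v) (h2 : P.pi h u' v') (hle : u ≤ u') : v ≤ v' :=
  P.conn_mono h h1 h2 (sup_le_sup_right hle _)

theorem conn_pi {x y : S} (h : x ⋖ y) {u : L x} {v : L y}
    (h1 : P.conn x y h u v) : P.pi h u v := by
  unfold pi
  rwa [sup_eq_left.2 (P.dmin_le h ⟨v, h1⟩)]

theorem pi_conn {x y : S} (h : x ⋖ y) {u : L x} {v : L y}
    (hu : u ∈ rdom (P.conn x y h)) (h1 : P.pi h u v) : P.conn x y h u v := by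
  unfold pi at h1
  rwa [sup_eq_left.2 (P.dmin_le h hu)] at h1

end Core

/-- The total saturated push along a chain. -/
noncomputable def Core.piOf {S : Type u} [Lattice S] {L : S → Type v}
    [∀ x, Lattice (L x)] [∀ x, BoundedOrder (L x)] (P : Core S L) :
    ∀ {a b : S}, SChain a b → L a → L b → Prop
  | _, _, .refl _ => fun u v => u = v
  | _, _, .cons h s => Relation.Comp (P.pi h) (Core.piOf P s)

namespace Core
variable {S : Type u} [Lattice S] {L : S → Type v}
    [∀ x, Lattice (L x)] [∀ x, BoundedOrder (L x)] (P : Core S L)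

theorem piOf_total : ∀ {a b : S} (ch : SChain a b) (u : L a), ∃ v, P.piOf ch u v := by
  intro a b ch
  induction ch with
  | refl => exact fun u => ⟨u, rfl⟩
  | cons h s ih =>
      intro u
      obtain ⟨p, hp⟩ := P.pi_total h u
      obtain ⟨v, hv⟩ := ih p
      exact ⟨v, p, hp, hv⟩

theorem piOf_func : ∀ {a b : S} (ch : SChain a b) {u : L a} {v v' : L b},
    P.piOf ch u v → P.piOf ch u v' → v = v' := by
  intro a b ch
  induction ch with
  | refl => intro u v v' h1 h2; rw [← h1, ← h2]
  | cons h s ih =>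
      rintro u v v' ⟨p, hp, hpv⟩ ⟨q, hq, hqv⟩
      rw [P.pi_func h hp hq] at hpv
      exact ih hpv hqv

theorem piOf_mono : ∀ {a b : S} (ch : SChain a b) {u u' : L a} {v v' : L b},
    P.piOf ch u v → P.piOf ch u' v' → u ≤ u' → v ≤ v' := by
  intro a b ch
  induction ch with
  | refl => intro u u' v v' h1 h2 hle; rw [← h1, ← h2]; exact hle
  | cons h s ih =>
      rintro u u' v v' ⟨p, hp, hpv⟩ ⟨q, hq, hqv⟩ hle
      exact ih hpv hqv (P.pi_mono h hp hq hle)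

theorem piOf_append {a b c : S} (ch1 : SChain a b) (ch2 : SChain b c) :
    P.piOf (ch1.append ch2) = Relation.Comp (P.piOf ch1) (P.piOf ch2) := by
  induction ch1 with
  | refl =>
      show P.piOf ch2 = Relation.Comp (fun u v => u = v) (P.piOf ch2)
      rw [Relation.eq_comp]
  | cons h s ih =>
      show Relation.Comp (P.pi h) (P.piOf (s.append ch2)) = _
      rw [ih, ← Relation.comp_assoc]
      rfl

theorem phi_pi : ∀ {a b : S} (ch : SChain a b) {u : L a} {v : L b},
    phiOf P.conn ch u v → P.piOf ch u v := by
  intro a b ch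
  induction ch with
  | refl => exact fun h => h
  | cons h s ih =>
      rintro u v ⟨p, hp, hpv⟩
      exact ⟨p, P.conn_pi h hp, ih hpv⟩

theorem pi_phi : ∀ {a b : S} (ch : SChain a b) {u : L a} {v : L b},
    u ∈ rdom (phiOf P.conn ch) → P.piOf ch u v → phiOf P.conn ch u v := by
  intro a b ch u v hu h1
  obtain ⟨v', hv'⟩ := hu
  rwa [P.piOf_func ch h1 (P.phi_pi ch hv')]

theorem gsq : ∀ (n : ℕ) {a v w J : S}, (P.icc_fin a J).toFinset.card ≤ n →
    a ≤ v → v ⊔ w = J → ∀ (C : SChain a w) (chv : SChain a v) (u : L a),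
    u ∈ rdom (phiOf P.conn chv) →
    (∀ z, P.piOf C u z → ∃ D : SChain w J, z ∈ rdom (phiOf P.conn D)) ∧
    (∃ (C0 : SChain w J) (C' : SChain v J), ∀ (z : L w) (zz : L J) (α : L v) (αz : L J),
      P.piOf C u z → P.piOf C0 z zz → phiOf P.conn chv u α → P.piOf C' α αz → αz ≤ zz) := by
  intro n
  induction n with
  | zero =>
      intro a v w J hc hav hJ C chv u hu
      exfalso
      have haJ : a ≤ J := by rw [← hJ]; exact hav.trans le_sup_left
      have h1 : a ∈ (P.icc_fin a J).toFinset := by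
        rw [Set.Finite.mem_toFinset]; exact ⟨le_rfl, haJ⟩
      have := Finset.card_pos.2 ⟨a, h1⟩
      omega
  | succ n ih =>
      intro a v w J hc hav hJ C chv u hu
      have haJ : a ≤ J := by rw [← hJ]; exact hav.trans le_sup_left
      cases chv with
      | refl =>
          have hJw : J = w := by rw [← hJ, sup_eq_right.2 C.le]
          subst hJw
          constructor
          · intro z _; exact ⟨.refl _, z, rfl⟩
          · refine ⟨.refl _, C, ?_⟩
            intro z zz α αz hz hzz hα hαz
            have hzz' : z = zz := hzz
            have hα' : u = α := hα
            rw [← hα'] at hαz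
            exact le_of_eq ((P.piOf_func C hαz hz).trans hzz')
      | @cons _ v1 _ h_av1 chv1 =>
        cases C with
        | refl =>
            have hJv : J = v := by rw [← hJ, sup_eq_left.2 hav]
            subst hJv
            constructor
            · intro z hz
              have hz' : u = z := hz
              exact ⟨SChain.cons h_av1 chv1, hz' ▸ hu⟩
            · refine ⟨SChain.cons h_av1 chv1, .refl _, ?_⟩
              intro z zz α αz hz hzz hα hαz
              have hz' : u = z := hz
              have hαz' : α = αz := hαz
              subst hz'
              have h1 : P.piOf (SChain.cons h_av1 chv1) u α := P.phi_pi _ hα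
              exact le_of_eq (hαz'.symm.trans (P.piOf_func _ h1 hzz))
        | @cons _ w1 _ h_aw1 C1 =>
          have key : ∀ u' : L a, u' ∈ rdom (phiOf P.conn (SChain.cons h_av1 chv1)) →
              u' ∈ rdom (P.conn _ _ h_aw1) →
              (∀ z, P.piOf (SChain.cons h_aw1 C1) u' z →
                ∃ D : SChain w J, z ∈ rdom (phiOf P.conn D)) ∧
              (∃ (C0 : SChain w J) (C' : SChain v J), ∀ (z : L w) (zz : L J) (α : L v) (αz : L J),
                P.piOf (SChain.cons h_aw1 C1) u' z → P.piOf C0 z zz →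
                phiOf P.conn (SChain.cons h_av1 chv1) u' α → P.piOf C' α αz → αz ≤ zz) := by
            clear hu
            intro u hu huw1
            obtain ⟨α₀, hα₀⟩ := hu
            obtain ⟨uv, h_uuv, h_uvα⟩ := hα₀
            by_cases e : v1 = w1
            · subst e
              have huv1 : P.conn _ _ h_aw1 u uv := h_uuv
              have hcard : (P.icc_fin v1 J).toFinset.card ≤ n := by
                have := icc_card_lt P.icc_fin h_av1.lt (le_refl J) haJ; omega
              obtain ⟨K1, K2⟩ := ih hcard chv1.le hJ C1 chv1 uv ⟨α₀, h_uvα⟩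
              constructor
              · rintro z ⟨p, hp, hpz⟩
                have hp' : P.conn _ _ h_aw1 u p := P.pi_conn h_aw1 ⟨uv, huv1⟩ hp
                rw [P.func h_aw1 u p uv hp' huv1] at hpz
                exact K1 z hpz
              · obtain ⟨C0, C', hK⟩ := K2
                refine ⟨C0, C', ?_⟩
                rintro z zz α αz ⟨p, hp, hpz⟩ hzz hα hαz
                have hp' : P.conn _ _ h_aw1 u p := P.pi_conn h_aw1 ⟨uv, huv1⟩ hp
                rw [P.func h_aw1 u p uv hp' huv1] at hpz
                obtain ⟨q, hq, hqα⟩ := hα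
                rw [P.func h_av1 u q uv hq h_uuv] at hqα
                exact hK z zz α αz hpz hzz hqα hαz
            · obtain ⟨chW⟩ := schain_exists P.icc_fin (le_sup_right : w1 ≤ v1 ⊔ w1)
              obtain ⟨chV1m⟩ := schain_exists P.icc_fin (le_sup_left : v1 ≤ v1 ⊔ w1)
              have hum : u ∈ rdom (phiOf P.conn (SChain.cons h_aw1 chW)) :=
                P.ps7 h_av1 h_aw1 e _ (cc_phiOf _) u ⟨uv, h_uuv⟩ huw1
              obtain ⟨mz, u1, h_uu1, h_u1mz⟩ := hum
              have hum2 : u ∈ rdom (phiOf P.conn (SChain.cons h_av1 chV1m)) := by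
                rw [P.phi_eq (SChain.cons h_av1 chV1m) (SChain.cons h_aw1 chW)]
                exact ⟨mz, u1, h_uu1, h_u1mz⟩
              obtain ⟨mz', p, h_up, h_pmz'⟩ := hum2
              rw [P.func h_av1 u p uv h_up h_uuv] at h_pmz'
              have hmzeq : mz' = mz := by
                have h1 : phiOf P.conn (SChain.cons h_aw1 chW) u mz' := by
                  rw [← P.phi_eq (SChain.cons h_av1 chV1m) (SChain.cons h_aw1 chW)]
                  exact ⟨uv, h_uuv, h_pmz'⟩
                exact P.cc_func (cc_phiOf _) u mz' mz h1 ⟨u1, h_uu1, h_u1mz⟩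
              have hw1J : v1 ⊔ w ≤ J := by rw [← hJ]; exact sup_le_sup_right chv1.le w
              have hcard1 : (P.icc_fin w1 (v1 ⊔ w)).toFinset.card ≤ n := by
                have := icc_card_lt P.icc_fin h_aw1.lt hw1J haJ; omega
              have hJ1 : (v1 ⊔ w1) ⊔ w = v1 ⊔ w := by rw [sup_assoc, sup_eq_right.2 C1.le]
              obtain ⟨K1a, C0a, C'a, K1b⟩ :=
                ih hcard1 le_sup_right hJ1 C1 chW u1 ⟨mz, h_u1mz⟩
              have hcard2 : (P.icc_fin v1 J).toFinset.card ≤ n := by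
                have := icc_card_lt P.icc_fin h_av1.lt (le_refl J) haJ; omega
              have hJ2 : v ⊔ (v1 ⊔ w) = J := by rw [← sup_assoc, sup_eq_left.2 chv1.le, hJ]
              obtain ⟨K2a, C0b, C'b, K2b⟩ :=
                ih hcard2 chv1.le hJ2 (chV1m.append C'a) chv1 uv ⟨α₀, h_uvα⟩
              obtain ⟨α1z, h_mza⟩ := P.piOf_total C'a mz
              have h_pimz : P.piOf chV1m uv mz := hmzeq ▸ P.phi_pi chV1m h_pmz'
              have h_piD : P.piOf (chV1m.append C'a) uv α1z := by
                rw [P.piOf_append]; exact ⟨mz, h_pimz, h_mza⟩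
              have hα1zdom : α1z ∈ rdom (phiOf P.conn C0b) := by
                obtain ⟨D2, hD2⟩ := K2a α1z h_piD
                rw [P.phi_eq C0b D2]; exact hD2
              constructor
              · rintro z ⟨p', hp, hpz⟩
                have hp' : P.conn _ _ h_aw1 u p' := P.pi_conn h_aw1 huw1 hp
                rw [P.func h_aw1 u p' u1 hp' h_uu1] at hpz
                obtain ⟨D1, zz1, hzz1⟩ := K1a z hpz
                have hzz1' : phiOf P.conn C0a z zz1 := by rw [P.phi_eq C0a D1]; exact hzz1
                have hzza : α1z ≤ zz1 := K1b z zz1 mz α1z hpz (P.phi_pi C0a hzz1') h_u1mz h_mza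
                have hzz1dom : zz1 ∈ rdom (phiOf P.conn C0b) :=
                  P.cc_dom_up (cc_phiOf C0b) hα1zdom hzza
                obtain ⟨zz2, hzz2⟩ := hzz1dom
                exact ⟨C0a.append C0b, zz2, by
                  rw [phiOf_append]; exact ⟨zz1, hzz1', hzz2⟩⟩
              · refine ⟨C0a.append C0b, C'b, ?_⟩
                rintro z zz α αz ⟨p', hp, hpz⟩ hzz hα hαz
                have hp' : P.conn _ _ h_aw1 u p' := P.pi_conn h_aw1 huw1 hp
                rw [P.func h_aw1 u p' u1 hp' h_uu1] at hpz
                rw [P.piOf_append] at hzz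
                obtain ⟨t1, h_zt1, h_t1zz⟩ := hzz
                obtain ⟨q, hq, hqα⟩ := hα
                rw [P.func h_av1 u q uv hq h_uuv] at hqα
                have h1 : α1z ≤ t1 := K1b z t1 mz α1z hpz h_zt1 h_u1mz h_mza
                obtain ⟨ζ, hζ⟩ := P.piOf_total C0b α1z
                have h2 : ζ ≤ zz := P.piOf_mono C0b hζ h_t1zz h1
                have h3 : αz ≤ ζ := K2b α1z ζ α αz h_piD hζ hqα hαz
                exact h3.trans h2
          -- use key with saturated element
          have h1 : u ⊔ P.dmin h_aw1 ∈ rdom (phiOf P.conn (SChain.cons h_av1 chv1)) :=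
            P.cc_dom_up (cc_phiOf _) hu le_sup_left
          have h2 : u ⊔ P.dmin h_aw1 ∈ rdom (P.conn _ _ h_aw1) :=
            P.dom_up h_aw1 _ _ (P.dmin_mem h_aw1) le_sup_right
          obtain ⟨K1, K2⟩ := key _ h1 h2
          have epi : ∀ p, P.pi h_aw1 u p → P.pi h_aw1 (u ⊔ P.dmin h_aw1) p := by
            intro p hp
            unfold pi at hp ⊢
            rwa [sup_assoc, sup_idem]
          constructor
          · rintro z ⟨p, hp, hpz⟩
            exact K1 z ⟨p, epi p hp, hpz⟩
          · obtain ⟨C0, C', hK⟩ := K2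
            refine ⟨C0, C', ?_⟩
            rintro z zz α αz ⟨p, hp, hpz⟩ hzz hα hαz
            obtain ⟨ᾱ, hᾱ⟩ := h1
            have hαᾱ : α ≤ ᾱ := P.cc_mono (cc_phiOf _) hα hᾱ le_sup_left
            obtain ⟨ᾱz, hᾱz⟩ := P.piOf_total C' ᾱ
            have h4 : αz ≤ ᾱz := P.piOf_mono C' hαz hᾱz hαᾱ
            have h5 : ᾱz ≤ zz := hK z zz ᾱ ᾱz ⟨p, epi p hp, hpz⟩ hzz hᾱ hᾱz
            exact h4.trans h5


theorem join_compat {x x' y y' : S} (hx : x ≤ x') (hy : y ≤ y')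
    {f : L x → L x' → Prop} (hf : ChainComp L P.conn x x' f) (hfne : ∃ u v, f u v)
    {g : L y → L y' → Prop} (hg : ChainComp L P.conn y y' g) (hgne : ∃ u v, g u v)
    {h : L (x ⊔ y) → L (x' ⊔ y') → Prop} (hh : ChainComp L P.conn (x ⊔ y) (x' ⊔ y') h) :
    ∃ u v, h u v := by
  obtain ⟨chx'⟩ := schain_exists P.icc_fin hx
  obtain ⟨chy'⟩ := schain_exists P.icc_fin hy
  have hfeq : f = phiOf P.conn chx' := P.indep _ _ hf (cc_phiOf _)
  have hgeq : g = phiOf P.conn chy' := P.indep _ _ hg (cc_phiOf _)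
  obtain ⟨u0, v0, huv0⟩ := hfne
  obtain ⟨u1, v1', huv1⟩ := hgne
  have htopx : (⊤ : L x) ∈ rdom (phiOf P.conn chx') :=
    P.cc_dom_up (cc_phiOf _) ⟨v0, hfeq ▸ huv0⟩ le_top
  have htopy : (⊤ : L y) ∈ rdom (phiOf P.conn chy') :=
    P.cc_dom_up (cc_phiOf _) ⟨v1', hgeq ▸ huv1⟩ le_top
  obtain ⟨Cxc⟩ := schain_exists P.icc_fin (le_sup_left : x ≤ x ⊔ y)
  obtain ⟨Cyc⟩ := schain_exists P.icc_fin (le_sup_right : y ≤ x ⊔ y)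
  obtain ⟨K1, C0, C', -⟩ := P.gsq _ le_rfl hx rfl Cxc chx' ⊤ htopx
  have hJ2 : y' ⊔ (x' ⊔ (x ⊔ y)) = x' ⊔ y' := by
    apply le_antisymm
    · exact sup_le le_sup_right
        (sup_le le_sup_left (sup_le (hx.trans le_sup_left) (hy.trans le_sup_right)))
    · exact sup_le (le_sup_left.trans le_sup_right) le_sup_left
  obtain ⟨K1', C0', C'', -⟩ := P.gsq _ le_rfl hy hJ2 (Cyc.append C0) chy' ⊤ htopy
  obtain ⟨g1, hg1⟩ := P.piOf_total Cxc (⊤ : L x)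
  obtain ⟨D, hD⟩ := K1 g1 hg1
  have hg1dom : g1 ∈ rdom (phiOf P.conn C0) := by rw [P.phi_eq C0 D]; exact hD
  obtain ⟨β, hβ⟩ := P.piOf_total Cyc (⊤ : L y)
  have hγdom : g1 ⊔ β ∈ rdom (phiOf P.conn C0) :=
    P.cc_dom_up (cc_phiOf C0) hg1dom le_sup_left
  obtain ⟨w1, hw1⟩ := hγdom
  have piw1 : P.piOf C0 (g1 ⊔ β) w1 := P.phi_pi C0 hw1
  obtain ⟨z2, hz2⟩ := P.piOf_total C0 β
  have hz2' : P.piOf (Cyc.append C0) (⊤ : L y) z2 := by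
    rw [P.piOf_append]; exact ⟨β, hβ, hz2⟩
  have hle : z2 ≤ w1 := P.piOf_mono C0 hz2 piw1 le_sup_right
  obtain ⟨D2, hD2⟩ := K1' z2 hz2'
  have hw1dom : w1 ∈ rdom (phiOf P.conn D2) := P.cc_dom_up (cc_phiOf D2) hD2 hle
  obtain ⟨vfin, hvfin⟩ := hw1dom
  have heq : h = phiOf P.conn (C0.append D2) := P.indep _ _ hh (cc_phiOf _)
  refine ⟨g1 ⊔ β, vfin, ?_⟩
  rw [heq, phiOf_append]
  exact ⟨w1, hw1, hvfin⟩



end Core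

section Dual
open OrderDual

variable {S : Type u} [Lattice S] {L : S → Type v}

/-- Covering transfer to the dual order. -/
theorem dcov {x y : Sᵒᵈ} (h : x ⋖ y) : ofDual y ⋖ ofDual x :=
  toDual_covBy_toDual_iff.1 h

theorem dcov' {x y : S} (h : x ⋖ y) : toDual y ⋖ toDual x :=
  toDual_covBy_toDual_iff.2 h

abbrev dualL (L : S → Type v) : Sᵒᵈ → Type v := fun x => (L (ofDual x))ᵒᵈ

def dualConn (Ω : ∀ x y : S, x ⋖ y → L x → L y → Prop) :
    ∀ x y : Sᵒᵈ, x ⋖ y → dualL L x → dualL L y → Prop :=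
  fun _ _ h u v => Ω _ _ (dcov h) v u

def Rflip {A : Type u₁} {B : Type u₂} (R : A → B → Prop) : B → A → Prop := fun b a => R a b

theorem Rflip_inj {A : Type u₁} {B : Type u₂} {R T : A → B → Prop} (h : Rflip R = Rflip T) : R = T := by
  funext a b
  exact congrFun (congrFun h b) a

theorem Rflip_comp {A : Type u₁} {B : Type u₂} {C : Type u₃} {R : A → B → Prop} {T : B → C → Prop} :
    Rflip (Relation.Comp R T) = Relation.Comp (Rflip T) (Rflip R) := by
  funext c a
  show (∃ b, R a b ∧ T b c) = ∃ b, T b c ∧ R a b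
  exact propext ⟨fun ⟨b, h1, h2⟩ => ⟨b, h2, h1⟩, fun ⟨b, h1, h2⟩ => ⟨b, h2, h1⟩⟩

theorem Rflip_eqRel {A : Type u₁} : Rflip (fun u v : A => u = v) = fun u v : A => u = v := by
  funext a b
  exact propext eq_comm

variable {Ω : ∀ x y : S, x ⋖ y → L x → L y → Prop}

theorem cc_dual_mk {a b : Sᵒᵈ} {f : dualL L a → dualL L b → Prop}
    (hf : ChainComp (dualL L) (dualConn Ω) a b f) :
    ChainComp L Ω (ofDual b) (ofDual a) (Rflip f) := by
  induction hf with
  | refl a =>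
      have e : (Rflip fun u v : dualL L a => u = v) = (fun u v : L (ofDual a) => u = v) := by
        funext u v; exact propext eq_comm
      exact e ▸ ChainComp.refl (ofDual a)
  | cons h hf ih =>
      erw [Rflip_comp]
      exact cc_append ih (cc_single (dcov h))

theorem cc_dual_intro {a b : S} {f : L a → L b → Prop}
    (hf : ChainComp L Ω a b f) :
    ChainComp (dualL L) (dualConn Ω) (toDual b) (toDual a) (Rflip f) := by
  induction hf with
  | refl a =>
      have e : (Rflip fun u v : L a => u = v) = (fun u v : dualL L (toDual a) => u = v) := by
        funext u v; exact propext eq_comm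
      exact e ▸ ChainComp.refl (L := dualL L) (Ω := dualConn Ω) (toDual a)
  | cons h hf ih =>
      erw [Rflip_comp]
      exact cc_append ih (cc_single (Ω := dualConn Ω) (dcov' h))

end Dual

namespace Core
open OrderDual
variable {S : Type u} [Lattice S] {L : S → Type v}
    [∀ x, Lattice (L x)] [∀ x, BoundedOrder (L x)] (P : Core S L)

/-- The dual polytone system. -/
noncomputable def dual : Core Sᵒᵈ (dualL L) where
  conn := dualConn P.conn
  icc_fin a b := by
    apply (P.icc_fin (ofDual b) (ofDual a)).subset
    intro x hx
    exact ⟨hx.2, hx.1⟩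
  blk_fin x := P.blk_fin _
  func h a b b' h1 h2 := P.inj (dcov h) b b' a h1 h2
  inj h a a' b h1 h2 := P.func (dcov h) b a a' h1 h2
  dom_ne h := by
    obtain ⟨a, b, hab⟩ := P.dom_ne (dcov h)
    exact ⟨b, a, hab⟩
  dom_up h a a' h1 h2 := P.im_down (dcov h) a a' h1 h2
  dom_inf h a a' h1 h2 := P.im_sup (dcov h) a a' h1 h2
  im_down h b b' h1 h2 := P.dom_up (dcov h) b b' h1 h2
  im_sup h b b' h1 h2 := P.dom_inf (dcov h) b b' h1 h2
  hom_sup h a a' b b' h1 h2 := P.hom_inf (dcov h) b b' a a' h1 h2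
  hom_inf h a a' b b' h1 h2 := P.hom_sup (dcov h) b b' a a' h1 h2
  indep f g hf hg := Rflip_inj (P.indep _ _ (cc_dual_mk hf) (cc_dual_mk hg))
  ps7 := by
    intro a t w ht hw hne f hf u h1 h2
    exact P.ps8 (dcov ht) (dcov hw) (fun e => hne (congrArg toDual e)) (Rflip f)
      (cc_dual_mk hf) u h1 h2
  ps8 := by
    intro a t w ht hw hne f hf z h1 h2
    exact P.ps7 (dcov ht) (dcov hw) (fun e => hne (congrArg toDual e)) (Rflip f)
      (cc_dual_mk hf) z h1 h2

theorem meet_compat {x x' y y' : S} (hx : x ≤ x') (hy : y ≤ y')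
    {f : L x → L x' → Prop} (hf : ChainComp L P.conn x x' f) (hfne : ∃ u v, f u v)
    {g : L y → L y' → Prop} (hg : ChainComp L P.conn y y' g) (hgne : ∃ u v, g u v)
    {h : L (x ⊓ y) → L (x' ⊓ y') → Prop} (hh : ChainComp L P.conn (x ⊓ y) (x' ⊓ y') h) :
    ∃ u v, h u v := by
  obtain ⟨u, v, huv⟩ := hfne
  obtain ⟨u', v', huv'⟩ := hgne
  obtain ⟨p, q, hpq⟩ := P.dual.join_compat (x := toDual x') (x' := toDual x)
    (y := toDual y') (y' := toDual y) hx hy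
    (cc_dual_intro hf) ⟨v, u, huv⟩ (cc_dual_intro hg) ⟨v', u', huv'⟩
    (cc_dual_intro hh)
  exact ⟨q, p, hpq⟩

end Core

namespace Core
variable {S : Type u} [Lattice S] {L : S → Type v}
    [∀ x, Lattice (L x)] [∀ x, BoundedOrder (L x)] (P : Core S L)

theorem hered_up {u0 p v0 : S} (h1 : u0 ≤ p) (h2 : p ≤ v0)
    {f : L u0 → L v0 → Prop} (hf : ChainComp L P.conn u0 v0 f) (hfne : ∃ u v, f u v)
    {g : L p → L v0 → Prop} (hg : ChainComp L P.conn p v0 g) : ∃ u v, g u v := by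
  obtain ⟨ch⟩ := schain_exists P.icc_fin h1
  have hfeq : f = Relation.Comp (phiOf P.conn ch) g :=
    P.indep _ _ hf (cc_append (cc_phiOf ch) hg)
  obtain ⟨u, v, huv⟩ := hfne
  rw [hfeq] at huv
  obtain ⟨m, _, hm⟩ := huv
  exact ⟨m, v, hm⟩

theorem hered_down {u0 p v0 : S} (h1 : u0 ≤ p) (h2 : p ≤ v0)
    {f : L u0 → L v0 → Prop} (hf : ChainComp L P.conn u0 v0 f) (hfne : ∃ u v, f u v)
    {g : L u0 → L p → Prop} (hg : ChainComp L P.conn u0 p g) : ∃ u v, g u v := by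
  obtain ⟨ch⟩ := schain_exists P.icc_fin h2
  have hfeq : f = Relation.Comp g (phiOf P.conn ch) :=
    P.indep _ _ hf (cc_append hg (cc_phiOf ch))
  obtain ⟨u, v, huv⟩ := hfne
  rw [hfeq] at huv
  obtain ⟨m, hm, _⟩ := huv
  exact ⟨u, m, hm⟩

end Core

section OfMin
variable {S : Type u} [Lattice S] {L : S → Type v}
    [∀ x, Lattice (L x)] [∀ x, BoundedOrder (L x)]
    {Ω : ∀ x y : S, x ⋖ y → L x → L y → Prop}

theorem indep_aux (hfin : ∀ a b : S, (Set.Icc a b).Finite)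
    (ps6 : ∀ x y : S, ∀ (hx : x ⊓ y ⋖ x) (hy : x ⊓ y ⋖ y),
      ∃ (f : L x → L (x ⊔ y) → Prop) (g : L y → L (x ⊔ y) → Prop),
        ChainComp L Ω x (x ⊔ y) f ∧ ChainComp L Ω y (x ⊔ y) g ∧
        Relation.Comp (Ω (x ⊓ y) x hx) f = Relation.Comp (Ω (x ⊓ y) y hy) g) :
    ∀ (n : ℕ) {a b : S} (f g : L a → L b → Prop), (hfin a b).toFinset.card ≤ n →
      ChainComp L Ω a b f → ChainComp L Ω a b g → f = g := by
  intro n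
  induction n with
  | zero =>
      intro a b f g hc hf hg
      exfalso
      have h1 : a ∈ (hfin a b).toFinset := by
        rw [Set.Finite.mem_toFinset]; exact ⟨le_rfl, cc_le hf⟩
      have := Finset.card_pos.2 ⟨a, h1⟩
      omega
  | succ n ih =>
      intro a b f g hc hf hg
      cases hf with
      | refl => exact (cc_self hg).symm
      | @cons _ x1 _ hx f' hf' =>
        cases hg with
        | refl => exact absurd (cc_le hf') hx.lt.not_ge
        | @cons _ y1 _ hy g' hg' =>
            by_cases e : x1 = y1
            · subst e
              have hcard : (hfin x1 b).toFinset.card ≤ n := by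
                have := icc_card_lt hfin hx.lt (le_refl b) (hx.le.trans (cc_le hf')); omega
              rw [ih f' g' hcard hf' hg']
            · rcases hx.eq_or_eq (le_inf hx.le hy.le) inf_le_left with hm | hm
              · have hm' : x1 ⊓ y1 = a := hm
                subst hm'
                obtain ⟨f₀, g₀, hf₀, hg₀, heq⟩ := ps6 x1 y1 hx hy
                obtain ⟨chk⟩ := schain_exists hfin
                  (sup_le (cc_le hf') (cc_le hg') : x1 ⊔ y1 ≤ b)
                have hk := cc_phiOf (Ω := Ω) chk
                have hcard1 : (hfin x1 b).toFinset.card ≤ n := by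
                  have := icc_card_lt hfin hx.lt (le_refl b) (hx.le.trans (cc_le hf')); omega
                have hcard2 : (hfin y1 b).toFinset.card ≤ n := by
                  have := icc_card_lt hfin hy.lt (le_refl b) (hy.le.trans (cc_le hg')); omega
                have h1 : f' = Relation.Comp f₀ (phiOf Ω chk) :=
                  ih f' _ hcard1 hf' (cc_append hf₀ hk)
                have h2 : g' = Relation.Comp g₀ (phiOf Ω chk) :=
                  ih g' _ hcard2 hg' (cc_append hg₀ hk)
                rw [h1, h2, ← Relation.comp_assoc, ← Relation.comp_assoc, heq]
              · exfalso
                have hxy : x1 ≤ y1 := inf_eq_left.1 hm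
                rcases hy.eq_or_eq hx.le hxy with h' | h'
                · exact hx.lt.ne' h'
                · exact e h'

/-- Build a `Core` from the minimal axioms. -/
noncomputable def Core.ofMin (hmin : MinimalAxioms L Ω) : Core S L where
  conn := Ω
  icc_fin := hmin.1
  blk_fin := hmin.2.2.2.1
  func := fun h a b b' => ((hmin.2.2.2.2.2.2.1) _ _ h).1.1 a b b'
  inj := fun h a a' b => ((hmin.2.2.2.2.2.2.1) _ _ h).1.2 a a' b
  dom_ne := fun h => ((hmin.2.2.2.2.2.2.1) _ _ h).2.1.1
  dom_up := fun h a a' ha hle => ((hmin.2.2.2.2.2.2.1) _ _ h).2.1.2.1 a ha a' hle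
  dom_inf := fun h a a' ha ha' => ((hmin.2.2.2.2.2.2.1) _ _ h).2.1.2.2 a ha a' ha'
  im_down := fun h b b' hb hle => ((hmin.2.2.2.2.2.2.1) _ _ h).2.2.1.2.1 b hb b' hle
  im_sup := fun h b b' hb hb' => ((hmin.2.2.2.2.2.2.1) _ _ h).2.2.1.2.2 b hb b' hb'
  hom_sup := fun h a a' b b' => ((hmin.2.2.2.2.2.2.1) _ _ h).2.2.2.1 a a' b b'
  hom_inf := fun h a a' b b' => ((hmin.2.2.2.2.2.2.1) _ _ h).2.2.2.2 a a' b b'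
  indep := fun f g hf hg =>
    indep_aux hmin.1 hmin.2.2.2.2.2.2.2.1 _ f g le_rfl hf hg
  ps7 := by
    intro a t w ht hw hne f hf u hu1 hu2
    have hm : t ⊓ w = a := by
      rcases ht.eq_or_eq (le_inf ht.le hw.le) inf_le_left with hm | hm
      · exact hm
      · exfalso
        have htw : t ≤ w := inf_eq_left.1 hm
        rcases hw.eq_or_eq ht.le htw with h' | h'
        · exact ht.lt.ne' h'
        · exact hne h'
    subst hm
    obtain ⟨k, hk, hsub⟩ := hmin.2.2.2.2.2.2.2.2.1 t w ht hw
    have heq : f = k := indep_aux hmin.1 hmin.2.2.2.2.2.2.2.1 _ f k le_rfl hf hk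
    rw [heq]
    exact hsub ⟨hu1, hu2⟩
  ps8 := by
    intro a t w ht hw hne f hf z hz1 hz2
    have hm : t ⊔ w = a := by
      rcases ht.eq_or_eq le_sup_left (sup_le ht.le hw.le) with hm | hm
      · exfalso
        have htw : w ≤ t := sup_eq_left.1 hm
        rcases hw.eq_or_eq htw ht.le with h' | h'
        · exact hne h'
        · exact ht.lt.ne h'
      · exact hm
    subst hm
    obtain ⟨k, hk, hsub⟩ := hmin.2.2.2.2.2.2.2.2.2 t w ht hw
    have heq : f = k := indep_aux hmin.1 hmin.2.2.2.2.2.2.2.1 _ f k le_rfl hf hk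
    rw [heq]
    exact hsub ⟨hz1, hz2⟩

end OfMin

end PT

theorem xi_ordered_tolerance_gamma_tolerance {S : Type u} [Lattice S] (L : S → Type v)
    [∀ x, Lattice (L x)] [∀ x, BoundedOrder (L x)]
    (Ω : ∀ x y : S, x ⋖ y → L x → L y → Prop)
    (hmin : MinimalAxioms L Ω)
    (Φ : ∀ x y : S, x ≤ y → (L x → L y → Prop))
    (hΦ : ∀ x y : S, ∀ h : x ≤ y, ChainComp L Ω x y (Φ x y h)) :
    IsOrderedTolerance (xiRel Φ) ∧
      IsTolerance (fun x y : S => xiRel Φ (x ⊓ y) (x ⊔ y)) := by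
  classical
  let P : PT.Core S L := PT.Core.ofMin hmin
  have hΦ' : ∀ x y : S, ∀ h : x ≤ y, ChainComp L P.conn x y (Φ x y h) := hΦ
  have hrefl : ∀ x, xiRel Φ x x := by
    intro x
    refine ⟨le_rfl, ⊤, ⊤, ?_⟩
    rw [PT.cc_self (hΦ x x le_rfl)]
  have hmeet : ∀ x x' y y', xiRel Φ x x' → xiRel Φ y y' →
      xiRel Φ (x ⊓ y) (x' ⊓ y') := by
    rintro x x' y y' ⟨hx, u, v, huv⟩ ⟨hy, u', v', huv'⟩
    exact ⟨inf_le_inf hx hy, P.meet_compat hx hy (hΦ' _ _ hx) ⟨u, v, huv⟩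
      (hΦ' _ _ hy) ⟨u', v', huv'⟩ (hΦ' _ _ _)⟩
  have hjoin : ∀ x x' y y', xiRel Φ x x' → xiRel Φ y y' →
      xiRel Φ (x ⊔ y) (x' ⊔ y') := by
    rintro x x' y y' ⟨hx, u, v, huv⟩ ⟨hy, u', v', huv'⟩
    exact ⟨sup_le_sup hx hy, P.join_compat hx hy (hΦ' _ _ hx) ⟨u, v, huv⟩
      (hΦ' _ _ hy) ⟨u', v', huv'⟩ (hΦ' _ _ _)⟩
  have hered : ∀ u0 p v0 : S, u0 ≤ p → p ≤ v0 → xiRel Φ u0 v0 → xiRel Φ p v0 := by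
    rintro u0 p v0 h1 h2 ⟨h0, u, v, huv⟩
    exact ⟨h2, P.hered_up h1 h2 (hΦ' _ _ h0) ⟨u, v, huv⟩ (hΦ' _ _ h2)⟩
  have hered' : ∀ u0 p v0 : S, u0 ≤ p → p ≤ v0 → xiRel Φ u0 v0 → xiRel Φ u0 p := by
    rintro u0 p v0 h1 h2 ⟨h0, u, v, huv⟩
    exact ⟨h1, P.hered_down h1 h2 (hΦ' _ _ h0) ⟨u, v, huv⟩ (hΦ' _ _ h1)⟩
  refine ⟨⟨fun x y h => h.1, hrefl, hmeet, hjoin⟩, ?_, ?_, ?_, ?_⟩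
  · intro x
    simp only [inf_idem, sup_idem]
    exact hrefl x
  · intro x y hxy
    rwa [inf_comm, sup_comm]
  · intro a b c d hab hcd
    obtain ⟨h1, wa, va, hwa⟩ := hab
    obtain ⟨h2, wc, vc, hwc⟩ := hcd
    have hle : (a ⊓ b) ⊔ (c ⊓ d) ≤ (a ⊔ b) ⊔ (c ⊔ d) := sup_le_sup h1 h2
    have hnew : ∃ u v, Φ _ _ hle u v := P.join_compat h1 h2 (hΦ' _ _ h1) ⟨wa, va, hwa⟩
      (hΦ' _ _ h2) ⟨wc, vc, hwc⟩ (hΦ' _ _ hle)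
    have etop : (a ⊔ c) ⊔ (b ⊔ d) = (a ⊔ b) ⊔ (c ⊔ d) := sup_sup_sup_comm a c b d
    rw [etop]
    refine hered _ _ _ ?_ ?_ ⟨hle, hnew⟩
    · exact sup_le (le_inf (inf_le_left.trans le_sup_left) (inf_le_right.trans le_sup_left))
        (le_inf (inf_le_left.trans le_sup_right) (inf_le_right.trans le_sup_right))
    · rw [← etop]
      exact inf_le_left.trans le_sup_left
  · intro a b c d hab hcd
    obtain ⟨h1, wa, va, hwa⟩ := hab
    obtain ⟨h2, wc, vc, hwc⟩ := hcd
    have hle : (a ⊓ b) ⊓ (c ⊓ d) ≤ (a ⊔ b) ⊓ (c ⊔ d) := inf_le_inf h1 h2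
    have hnew : ∃ u v, Φ _ _ hle u v := P.meet_compat h1 h2 (hΦ' _ _ h1) ⟨wa, va, hwa⟩
      (hΦ' _ _ h2) ⟨wc, vc, hwc⟩ (hΦ' _ _ hle)
    have ebot : (a ⊓ c) ⊓ (b ⊓ d) = (a ⊓ b) ⊓ (c ⊓ d) := inf_inf_inf_comm a c b d
    rw [ebot]
    refine hered' _ _ _ ?_ ?_ ⟨hle, hnew⟩
    · rw [← ebot]
      exact le_sup_left.trans' inf_le_left
    · exact sup_le (le_inf (inf_le_left.trans le_sup_left) (inf_le_right.trans le_sup_left))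
        (le_inf (inf_le_left.trans le_sup_right) (inf_le_right.trans le_sup_right))
end

section
/- A skeleton lattice S, family of blocks (L_x)_{x ∈ S}, and family of connections (Ω_{x,y})_{x ⋖ y in S} satisfy the minimal axioms if and only if there exist a tolerance γ on S and a family of partial bijections (Φ_{x,y})_{x ≤ y in S, x γ y} such that (S, γ, (L_x), (Φ_{x,y})) satisfies the baseline axioms and Φ_{x,y} = Ω_{x,y} for every cover x ⋖ y in S. -/
/-- The baseline axioms for a polytone system `(S, γ, (L x), Φ)`. The
connections `Φ x y hle hγ` are given for `x ≤ y` with `x γ y`; since the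
needed instances of `γ` in (PS4)–(PS8) are derivable from the tolerance
axioms, we universally quantify over their proofs. -/
def BaselineAxioms {S : Type u} [Lattice S] (L : S → Type v)
    [∀ x, Lattice (L x)] [∀ x, BoundedOrder (L x)]
    (γ : S → S → Prop)
    (Φ : ∀ x y : S, x ≤ y → γ x y → (L x → L y → Prop)) : Prop :=
  -- (PS1) S is l.f.f.c.
  (∀ a b : S, (Set.Icc a b).Finite) ∧
  (∀ a : S, {b | a ⋖ b}.Finite) ∧
  (∀ a : S, {b | b ⋖ a}.Finite) ∧
  -- γ is a tolerance on S
  IsTolerance γ ∧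
  -- (PS2) blocks are f.m.c.
  (∀ x, Finite (L x)) ∧
  (∀ x, IsModularLattice (L x)) ∧
  (∀ x, ComplementedLattice (L x)) ∧
  -- (PS3)
  (∀ x y : S, ∀ (hle : x ≤ y) (hγ : γ x y),
    IsPartialBij (Φ x y hle hγ) ∧ IsLatFilter (rdom (Φ x y hle hγ)) ∧
    IsLatIdeal (rim (Φ x y hle hγ)) ∧ IsLatHomRel (Φ x y hle hγ)) ∧
  -- (PS4)
  (∀ x : S, ∀ hγ : γ x x, Φ x x le_rfl hγ = fun u v => u = v) ∧
  -- (PS5)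
  (∀ x y z : S, ∀ (hxy : x ≤ y) (hyz : y ≤ z) (hγ1 : γ x y) (hγ2 : γ y z),
    (rim (Φ x y hxy hγ1) ∩ rdom (Φ y z hyz hγ2)).Nonempty → γ x z) ∧
  -- (PS6)
  (∀ x z y : S, ∀ (hxz : x ≤ z) (hzy : z ≤ y)
      (hγxy : γ x y) (hγxz : γ x z) (hγzy : γ z y),
    Φ x y (hxz.trans hzy) hγxy =
      Relation.Comp (Φ x z hxz hγxz) (Φ z y hzy hγzy)) ∧
  -- (PS7)
  (∀ x y : S, γ x y → ∀ (h1 : γ x (x ⊔ y)) (h2 : γ y (x ⊔ y)) (h3 : γ (x ⊓ y) (x ⊔ y)),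
    rim (Φ x (x ⊔ y) le_sup_left h1) ∩ rim (Φ y (x ⊔ y) le_sup_right h2) ⊆
      rim (Φ (x ⊓ y) (x ⊔ y) (inf_le_left.trans le_sup_left) h3)) ∧
  -- (PS8)
  (∀ x y : S, γ x y → ∀ (h1 : γ (x ⊓ y) x) (h2 : γ (x ⊓ y) y) (h3 : γ (x ⊓ y) (x ⊔ y)),
    rdom (Φ (x ⊓ y) x inf_le_left h1) ∩ rdom (Φ (x ⊓ y) y inf_le_right h2) ⊆
      rdom (Φ (x ⊓ y) (x ⊔ y) (inf_le_left.trans le_sup_left) h3)) ∧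
  -- (PS9)
  (∀ x y : S, x ⋖ y → γ x y)

namespace PolyAux
set_option linter.unusedSectionVars false

universe u v

variable {S : Type u} [Lattice S] {L : S → Type v} [∀ x, Lattice (L x)]
  [∀ x, BoundedOrder (L x)] {Ω : ∀ x y : S, x ⋖ y → L x → L y → Prop}

theorem comp_id_left {α β : Type*} (f : α → β → Prop) :
    Relation.Comp (fun u v => u = v) f = f := by
  funext a b; simp [Relation.Comp]

theorem comp_id_right {α β : Type*} (f : α → β → Prop) :
    Relation.Comp f (fun u v => u = v) = f := by
  funext a b; simp [Relation.Comp]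

theorem comp_assoc' {α β γ δ : Type*} (f : α → β → Prop) (g : β → γ → Prop)
    (h : γ → δ → Prop) :
    Relation.Comp (Relation.Comp f g) h = Relation.Comp f (Relation.Comp g h) := by
  funext a d
  simp only [Relation.Comp, eq_iff_iff]
  tauto

theorem chainComp_le {a b : S} {f : L a → L b → Prop} (h : ChainComp L Ω a b f) : a ≤ b := by
  induction h with
  | refl a => exact le_rfl
  | cons h _ ih => exact h.le.trans ih

theorem chainComp_self {a : S} {f : L a → L a → Prop} (h : ChainComp L Ω a a f) :
    f = fun u v => u = v := by
  cases h with
  | refl => rfl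
  | cons hc hf => exact absurd (hc.lt.trans_le (chainComp_le hf)) (lt_irrefl a)

theorem chainComp_append : ∀ {a b : S} {f : L a → L b → Prop}, ChainComp L Ω a b f →
    ∀ {c : S} {g : L b → L c → Prop}, ChainComp L Ω b c g →
    ChainComp L Ω a c (Relation.Comp f g) := by
  intro a b f h1
  induction h1 with
  | refl a => intro c g h2; rw [comp_id_left]; exact h2
  | cons hc hf ih =>
      intro c g h2
      rw [comp_assoc']
      exact .cons hc (ih h2)

theorem icc_pos {a b : S} (hIcc : ∀ a b : S, (Set.Icc a b).Finite) (hab : a ≤ b) :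
    0 < (Set.Icc a b).ncard :=
  (Set.ncard_pos (hIcc a b)).mpr ⟨a, le_rfl, hab⟩

theorem ncard_lt_aux (hIcc : ∀ a b : S, (Set.Icc a b).Finite) {a b a' b' : S}
    (h1 : a ≤ a') (h2 : b' ≤ b) (x : S) (hx : x ∈ Set.Icc a b) (hx' : x ∉ Set.Icc a' b') :
    (Set.Icc a' b').ncard < (Set.Icc a b).ncard :=
  Set.ncard_lt_ncard ⟨Set.Icc_subset_Icc h1 h2, fun h => hx' (h hx)⟩ (hIcc a b)

theorem exists_cover_above (hIcc : ∀ a b : S, (Set.Icc a b).Finite) {a b : S} (h : a < b) :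
    ∃ u, a ⋖ u ∧ u ≤ b := by
  have hs : ({t | a < t ∧ t ≤ b} : Set S).Finite :=
    (hIcc a b).subset (fun t ht => ⟨ht.1.le, ht.2⟩)
  have hne : hs.toFinset.Nonempty := ⟨b, by rw [Set.Finite.mem_toFinset]; exact ⟨h, le_rfl⟩⟩
  obtain ⟨m, hm, hmin⟩ := hs.toFinset.exists_minimal hne
  rw [Set.Finite.mem_toFinset] at hm
  refine ⟨m, ⟨hm.1, fun c hac hcm => ?_⟩, hm.2⟩
  exact absurd (hmin (hs.mem_toFinset.mpr ⟨hac, hcm.le.trans hm.2⟩) hcm.le) (not_le_of_gt hcm)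

theorem exists_cover_below (hIcc : ∀ a b : S, (Set.Icc a b).Finite) {a b : S} (h : a < b) :
    ∃ u, a ≤ u ∧ u ⋖ b := by
  have hs : ({t | a ≤ t ∧ t < b} : Set S).Finite :=
    (hIcc a b).subset (fun t ht => ⟨ht.1, ht.2.le⟩)
  have hne : hs.toFinset.Nonempty := ⟨a, by rw [Set.Finite.mem_toFinset]; exact ⟨le_rfl, h⟩⟩
  obtain ⟨m, hm, hmax⟩ := hs.toFinset.exists_maximal hne
  rw [Set.Finite.mem_toFinset] at hm
  refine ⟨m, hm.1, ⟨hm.2, fun c hmc hcb => ?_⟩⟩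
  exact absurd (hmax (hs.mem_toFinset.mpr ⟨hm.1.trans hmc.le, hcb⟩) hmc.le) (not_le_of_gt hmc)

theorem chainComp_exists (hIcc : ∀ a b : S, (Set.Icc a b).Finite) :
    ∀ (n : ℕ) {a b : S}, (Set.Icc a b).ncard ≤ n → a ≤ b → ∃ f, ChainComp L Ω a b f := by
  intro n
  induction n with
  | zero => intro a b hn hab; exact absurd (Nat.le_zero.mp hn) (icc_pos hIcc hab).ne'
  | succ n ih =>
      intro a b hn hab
      rcases eq_or_lt_of_le hab with rfl | hlt
      · exact ⟨_, .refl a⟩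
      · obtain ⟨u, hcu, hub⟩ := exists_cover_above hIcc hlt
        have hlt' : (Set.Icc u b).ncard < (Set.Icc a b).ncard :=
          ncard_lt_aux hIcc hcu.le le_rfl a ⟨le_rfl, hab⟩
            (fun hmem => absurd hmem.1 (not_le_of_gt hcu.lt))
        obtain ⟨g, hg⟩ := ih (Nat.lt_succ_iff.mp (lt_of_lt_of_le hlt' hn)) hub
        exact ⟨_, .cons hcu hg⟩

theorem cover_inf {a u v : S} (h1 : a ⋖ u) (h2 : a ⋖ v) (h : u ≠ v) : u ⊓ v = a := by
  have hle : a ≤ u ⊓ v := le_inf h1.le h2.le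
  rcases hle.lt_or_eq with hlt | he
  · have e1 : u ⊓ v = u := (lt_or_eq_of_le inf_le_left).resolve_left (h1.2 hlt)
    have e2 : u ⊓ v = v := (lt_or_eq_of_le inf_le_right).resolve_left (h2.2 hlt)
    exact absurd (e1.symm.trans e2) h
  · exact he.symm

theorem cover_sup {p q s : S} (h1 : p ⋖ s) (h2 : q ⋖ s) (h : p ≠ q) : p ⊔ q = s := by
  have hle : p ⊔ q ≤ s := sup_le h1.le h2.le
  rcases hle.lt_or_eq with hlt | he
  · have e1 : p = p ⊔ q := (lt_or_eq_of_le le_sup_left).elim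
      (fun hl => absurd hlt (h1.2 hl)) id
    have e2 : q = p ⊔ q := (lt_or_eq_of_le le_sup_right).elim
      (fun hl => absurd hlt (h2.2 hl)) id
    exact absurd (e1.trans e2.symm) h
  · exact he


section Unique

variable (hm : MinimalAxioms L Ω)
include hm

theorem ma_icc : ∀ a b : S, (Set.Icc a b).Finite := hm.1
theorem ma_ps3 : ∀ x y : S, ∀ h : x ⋖ y, IsPartialBij (Ω x y h) ∧ IsLatFilter (rdom (Ω x y h)) ∧
    IsLatIdeal (rim (Ω x y h)) ∧ IsLatHomRel (Ω x y h) := hm.2.2.2.2.2.2.1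
theorem ma_ps6 : ∀ x y : S, ∀ (hx : x ⊓ y ⋖ x) (hy : x ⊓ y ⋖ y),
    ∃ (f : L x → L (x ⊔ y) → Prop) (g : L y → L (x ⊔ y) → Prop),
      ChainComp L Ω x (x ⊔ y) f ∧ ChainComp L Ω y (x ⊔ y) g ∧
      Relation.Comp (Ω (x ⊓ y) x hx) f = Relation.Comp (Ω (x ⊓ y) y hy) g :=
  hm.2.2.2.2.2.2.2.1
theorem ma_ps7 : ∀ x y : S, ∀ (hx : x ⊓ y ⋖ x) (hy : x ⊓ y ⋖ y),
    ∃ h : L (x ⊓ y) → L (x ⊔ y) → Prop, ChainComp L Ω (x ⊓ y) (x ⊔ y) h ∧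
      rdom (Ω (x ⊓ y) x hx) ∩ rdom (Ω (x ⊓ y) y hy) ⊆ rdom h :=
  hm.2.2.2.2.2.2.2.2.1
theorem ma_ps8 : ∀ x y : S, ∀ (hx : x ⋖ x ⊔ y) (hy : y ⋖ x ⊔ y),
    ∃ h : L (x ⊓ y) → L (x ⊔ y) → Prop, ChainComp L Ω (x ⊓ y) (x ⊔ y) h ∧
      rim (Ω x (x ⊔ y) hx) ∩ rim (Ω y (x ⊔ y) hy) ⊆ rim h :=
  hm.2.2.2.2.2.2.2.2.2

theorem chainComp_unique_aux :
    ∀ (n : ℕ) {a b : S} {f g : L a → L b → Prop}, (Set.Icc a b).ncard ≤ n →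
      ChainComp L Ω a b f → ChainComp L Ω a b g → f = g := by
  intro n
  induction n with
  | zero =>
      intro a b f g hn h1 _
      exact absurd (Nat.le_zero.mp hn) (icc_pos (ma_icc hm) (chainComp_le h1)).ne'
  | succ n ih =>
      intro a b f g hn h1 h2
      cases h1 with
      | refl => exact (chainComp_self h2).symm
      | cons hcu hfu =>
          rename_i u f₁
          cases h2 with
          | refl => exact absurd (hcu.lt.trans_le (chainComp_le hfu)) (lt_irrefl _)
          | cons hcv hgv =>
              rename_i v g₁
              have hub := chainComp_le hfu
              have hvb := chainComp_le hgv
              have hcard : ∀ w : S, a ⋖ w → w ≤ b → (Set.Icc w b).ncard ≤ n := by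
                intro w hw hwb
                exact Nat.lt_succ_iff.mp (lt_of_lt_of_le
                  (ncard_lt_aux (ma_icc hm) hw.le le_rfl a ⟨le_rfl, hw.le.trans hwb⟩
                    (fun hmem => absurd hmem.1 (not_le_of_gt hw.lt))) hn)
              by_cases huv : u = v
              · subst huv
                have : f₁ = g₁ := ih (hcard u hcu hub) hfu hgv
                rw [this]
              · have hinf : u ⊓ v = a := cover_inf hcu hcv huv
                subst hinf
                obtain ⟨p, q, hp, hq, heq⟩ := ma_ps6 hm u v hcu hcv
                obtain ⟨r, hr⟩ : ∃ r, ChainComp L Ω (u ⊔ v) b r := chainComp_exists (ma_icc hm) (Set.Icc (u ⊔ v) b).ncard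
                  le_rfl (sup_le hub hvb)
                have hf₁ : f₁ = Relation.Comp p r :=
                  ih (hcard u hcu hub) hfu (chainComp_append hp hr)
                have hg₁ : g₁ = Relation.Comp q r :=
                  ih (hcard v hcv hvb) hgv (chainComp_append hq hr)
                rw [hf₁, hg₁, ← comp_assoc', ← comp_assoc', heq]

theorem chainComp_unique {a b : S} {f g : L a → L b → Prop}
    (h1 : ChainComp L Ω a b f) (h2 : ChainComp L Ω a b g) : f = g :=
  chainComp_unique_aux hm _ le_rfl h1 h2

end Unique

open Classical in
noncomputable def D (Ω : ∀ x y : S, x ⋖ y → L x → L y → Prop) (a b : S) :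
    L a → L b → Prop :=
  if h : ∃ f, ChainComp L Ω a b f then h.choose else fun _ _ => False

theorem D_spec {a b : S} (h : ∃ f, ChainComp L Ω a b f) : ChainComp L Ω a b (D Ω a b) := by
  rw [D, dif_pos h]
  exact h.choose_spec

variable (hm : MinimalAxioms L Ω)
include hm

theorem chainComp_D {a b : S} (hab : a ≤ b) : ChainComp L Ω a b (D Ω a b) :=
  D_spec (chainComp_exists (ma_icc hm) (Set.Icc a b).ncard le_rfl hab)

theorem D_eq {a b : S} {f : L a → L b → Prop} (hf : ChainComp L Ω a b f) : D Ω a b = f :=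
  chainComp_unique hm (D_spec ⟨f, hf⟩) hf

theorem D_self (a : S) : D Ω a a = fun u v => u = v := D_eq hm (.refl a)

theorem D_comp {a b c : S} (hab : a ≤ b) (hbc : b ≤ c) :
    D Ω a c = Relation.Comp (D Ω a b) (D Ω b c) :=
  D_eq hm (chainComp_append (chainComp_D hm hab) (chainComp_D hm hbc))

theorem D_cover {a b : S} (h : a ⋖ b) : D Ω a b = Ω a b h :=
  D_eq hm (by
    have : ChainComp L Ω a b (Relation.Comp (Ω a b h) (fun u v => u = v)) :=
      .cons h (.refl b)
    rwa [comp_id_right] at this)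

omit hm in
theorem rel_mono {A B : Type*} [Lattice A] [Lattice B] {R : A → B → Prop}
    (hfun : ∀ a b b', R a b → R a b' → b = b')
    (hsup : ∀ a a' b b', R a b → R a' b' → R (a ⊔ a') (b ⊔ b'))
    {u u' v v'} (h : R u v) (h' : R u' v') (hle : u ≤ u') : v ≤ v' := by
  have h2 := hsup _ _ _ _ h h'
  rw [sup_eq_right.mpr hle] at h2
  have := hfun _ _ _ h' h2
  rw [this]
  exact le_sup_left

omit hm in
theorem rel_mono_inv {A B : Type*} [Lattice A] [Lattice B] {R : A → B → Prop}
    (hinj : ∀ a a' b, R a b → R a' b → a = a')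
    (hinf : ∀ a a' b b', R a b → R a' b' → R (a ⊓ a') (b ⊓ b'))
    {u u' v v'} (h : R u v) (h' : R u' v') (hle : v ≤ v') : u ≤ u' := by
  have h2 := hinf _ _ _ _ h h'
  rw [inf_eq_left.mpr hle] at h2
  have := hinj _ _ _ h h2
  rw [this]
  exact inf_le_right

/-- Bundled structural properties of a relation between blocks. -/
def GoodRel {A B : Type*} [Lattice A] [Lattice B] (R : A → B → Prop) : Prop :=
  IsPartialBij R ∧ IsLatHomRel R ∧
  (∀ u ∈ rdom R, ∀ u', u ≤ u' → u' ∈ rdom R) ∧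
  (∀ u ∈ rdom R, ∀ u' ∈ rdom R, u ⊓ u' ∈ rdom R) ∧
  (∀ v ∈ rim R, ∀ v', v' ≤ v → v' ∈ rim R) ∧
  (∀ v ∈ rim R, ∀ v' ∈ rim R, v ⊔ v' ∈ rim R)

omit hm in
theorem goodRel_id {A : Type*} [Lattice A] : GoodRel (fun u v : A => u = v) :=
  ⟨⟨fun _ _ _ h h' => h ▸ h'.symm ▸ rfl, fun _ _ _ h h' => h.trans h'.symm⟩,
   ⟨fun _ _ _ _ h h' => by rw [h, h'], fun _ _ _ _ h h' => by rw [h, h']⟩,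
   fun _ _ u' _ => ⟨u', rfl⟩, fun u _ u' _ => ⟨u ⊓ u', rfl⟩,
   fun _ _ v' _ => ⟨v', rfl⟩, fun v _ v' _ => ⟨v ⊔ v', rfl⟩⟩

omit hm in
theorem goodRel_comp {A B C : Type*} [Lattice A] [Lattice B] [Lattice C]
    {R : A → B → Prop} {T : B → C → Prop}
    (hR : IsPartialBij R ∧ IsLatFilter (rdom R) ∧ IsLatIdeal (rim R) ∧ IsLatHomRel R)
    (hT : GoodRel T) : GoodRel (Relation.Comp R T) := by
  obtain ⟨⟨Rfun, Rinj⟩, ⟨-, Rup, Rinf⟩, ⟨-, Rdown, Rsup⟩, ⟨Rhs, Rhi⟩⟩ := hR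
  obtain ⟨⟨Tfun, Tinj⟩, ⟨Ths, Thi⟩, Tup, Tinf, Tdown, Tsup⟩ := hT
  refine ⟨⟨?_, ?_⟩, ⟨?_, ?_⟩, ?_, ?_, ?_, ?_⟩
  · rintro a b b' ⟨m, hm1, hm2⟩ ⟨m', hm1', hm2'⟩
    obtain rfl := Rfun _ _ _ hm1 hm1'
    exact Tfun _ _ _ hm2 hm2'
  · rintro a a' b ⟨m, hm1, hm2⟩ ⟨m', hm1', hm2'⟩
    obtain rfl := Tinj _ _ _ hm2 hm2'
    exact Rinj _ _ _ hm1 hm1'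
  · rintro a a' b b' ⟨m, hm1, hm2⟩ ⟨m', hm1', hm2'⟩
    exact ⟨m ⊔ m', Rhs _ _ _ _ hm1 hm1', Ths _ _ _ _ hm2 hm2'⟩
  · rintro a a' b b' ⟨m, hm1, hm2⟩ ⟨m', hm1', hm2'⟩
    exact ⟨m ⊓ m', Rhi _ _ _ _ hm1 hm1', Thi _ _ _ _ hm2 hm2'⟩
  · rintro u ⟨c, m, hm1, hm2⟩ u' hle
    obtain ⟨m', hm1'⟩ := Rup u ⟨m, hm1⟩ u' hle
    have hmm : m ≤ m' := rel_mono Rfun Rhs hm1 hm1' hle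
    obtain ⟨c', hc'⟩ := Tup m ⟨c, hm2⟩ m' hmm
    exact ⟨c', m', hm1', hc'⟩
  · rintro u ⟨c, m, hm1, hm2⟩ u' ⟨c', m', hm1', hm2'⟩
    obtain ⟨cc, hcc⟩ := Tinf m ⟨c, hm2⟩ m' ⟨c', hm2'⟩
    exact ⟨cc, m ⊓ m', Rhi _ _ _ _ hm1 hm1', hcc⟩
  · rintro v ⟨u, m, hm1, hm2⟩ v' hle
    obtain ⟨m', hm1'⟩ := Tdown v ⟨m, hm2⟩ v' hle
    have hmm : m' ≤ m := rel_mono_inv Tinj Thi hm1' hm2 hle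
    obtain ⟨u', hu'⟩ := Rdown m ⟨u, hm1⟩ m' hmm
    exact ⟨u', m', hu', hm1'⟩
  · rintro v ⟨u, m, hm1, hm2⟩ v' ⟨u', m', hm1', hm2'⟩
    obtain ⟨uu, huu⟩ := Rsup m ⟨u, hm1⟩ m' ⟨u', hm1'⟩
    exact ⟨uu, m ⊔ m', huu, Ths _ _ _ _ hm2 hm2'⟩

omit hm in
theorem chainComp_good {a b : S} {f : L a → L b → Prop}
    (hps3 : ∀ x y : S, ∀ h : x ⋖ y, IsPartialBij (Ω x y h) ∧ IsLatFilter (rdom (Ω x y h)) ∧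
      IsLatIdeal (rim (Ω x y h)) ∧ IsLatHomRel (Ω x y h))
    (hf : ChainComp L Ω a b f) : GoodRel f := by
  induction hf with
  | refl a => exact goodRel_id
  | cons hc _ ih => exact goodRel_comp (hps3 _ _ hc) ih

theorem D_good {a b : S} (hab : a ≤ b) : GoodRel (D Ω a b) :=
  chainComp_good (ma_ps3 hm) (chainComp_D hm hab)

/-- Nonemptiness of the canonical composite. -/
def Dne (Ω : ∀ x y : S, x ⋖ y → L x → L y → Prop) (a b : S) : Prop :=
  ∃ u v, D Ω a b u v

omit hm in
theorem Dne_congr {a a' b b' : S} (h : a = a') (h' : b = b') : Dne Ω a b ↔ Dne Ω a' b' := by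
  subst h; subst h'; rfl

omit hm in
theorem D_rim_congr {a a' b : S} (h : a = a') : rim (D Ω a b) = rim (D Ω a' b) := by
  subst h; rfl

omit hm in
theorem D_rdom_congr {a b b' : S} (h : b = b') : rdom (D Ω a b) = rdom (D Ω a b') := by
  subst h; rfl

theorem Dne_refl (a : S) : Dne Ω a a :=
  ⟨⊤, ⊤, by rw [D_self hm]⟩

theorem top_mem_rdom {a b : S} (hab : a ≤ b) (h : Dne Ω a b) : (⊤ : L a) ∈ rdom (D Ω a b) := by
  obtain ⟨u, v, huv⟩ := h
  exact (D_good hm hab).2.2.1 u ⟨v, huv⟩ ⊤ le_top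

theorem bot_mem_rim {a b : S} (hab : a ≤ b) (h : Dne Ω a b) : (⊥ : L b) ∈ rim (D Ω a b) := by
  obtain ⟨u, v, huv⟩ := h
  exact (D_good hm hab).2.2.2.2.1 v ⟨u, huv⟩ ⊥ bot_le

theorem rim_factor {m j s : S} (h1 : m ≤ j) (h2 : j ≤ s) {b : L s}
    (hb : b ∈ rim (D Ω m s)) : ∃ c, D Ω j s c b ∧ c ∈ rim (D Ω m j) := by
  obtain ⟨a0, ha⟩ := hb
  rw [D_comp hm h1 h2] at ha
  obtain ⟨c, hc1, hc2⟩ := ha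
  exact ⟨c, hc2, a0, hc1⟩

theorem rim_lift {m j s : S} (h1 : m ≤ j) (h2 : j ≤ s) {c : L j} {b : L s}
    (hc : c ∈ rim (D Ω m j)) (hcb : D Ω j s c b) : b ∈ rim (D Ω m s) := by
  obtain ⟨a0, ha0⟩ := hc
  refine ⟨a0, ?_⟩
  rw [D_comp hm h1 h2]
  exact ⟨c, ha0, hcb⟩

theorem rim_mono {m j s : S} (h1 : m ≤ j) (h2 : j ≤ s) :
    rim (D Ω m s) ⊆ rim (D Ω j s) := by
  intro b hb
  obtain ⟨c, hc, -⟩ := rim_factor hm h1 h2 hb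
  exact ⟨c, hc⟩

theorem rdom_factor {a m x : S} (h1 : a ≤ m) (h2 : m ≤ x) {u : L a}
    (hu : u ∈ rdom (D Ω a x)) : ∃ c, D Ω a m u c ∧ c ∈ rdom (D Ω m x) := by
  obtain ⟨v, hv⟩ := hu
  rw [D_comp hm h1 h2] at hv
  obtain ⟨c, hc1, hc2⟩ := hv
  exact ⟨c, hc1, v, hc2⟩

theorem rdom_lift {a m x : S} (h1 : a ≤ m) (h2 : m ≤ x) {u : L a} {c : L m}
    (huc : D Ω a m u c) (hc : c ∈ rdom (D Ω m x)) : u ∈ rdom (D Ω a x) := by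
  obtain ⟨v, hv⟩ := hc
  refine ⟨v, ?_⟩
  rw [D_comp hm h1 h2]
  exact ⟨c, huc, hv⟩

theorem rdom_anti {a m x : S} (h1 : a ≤ m) (h2 : m ≤ x) :
    rdom (D Ω a x) ⊆ rdom (D Ω a m) := by
  intro u hu
  obtain ⟨c, hc, -⟩ := rdom_factor hm h1 h2 hu
  exact ⟨c, hc⟩

theorem D_shrink {p p' q' q : S} (h1 : p ≤ p') (h2 : p' ≤ q') (h3 : q' ≤ q)
    (h : Dne Ω p q) : Dne Ω p' q' := by
  obtain ⟨u, v, huv⟩ := h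
  rw [D_comp hm (h1.trans h2) h3, D_comp hm h1 h2] at huv
  obtain ⟨c, ⟨d, hd1, hd2⟩, -⟩ := huv
  exact ⟨d, c, hd2⟩

theorem coverPS7 {p u v : S} (h1 : p ⋖ u) (h2 : p ⋖ v) (hne : u ≠ v) :
    rdom (D Ω p u) ∩ rdom (D Ω p v) ⊆ rdom (D Ω p (u ⊔ v)) := by
  have hinf : u ⊓ v = p := cover_inf h1 h2 hne
  subst hinf
  obtain ⟨h, hch, hsub⟩ := ma_ps7 hm u v h1 h2
  rw [D_cover hm h1, D_cover hm h2, D_eq hm hch]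
  exact hsub

theorem coverPS8 {p q s : S} (h1 : p ⋖ s) (h2 : q ⋖ s) (hne : p ≠ q) :
    rim (D Ω p s) ∩ rim (D Ω q s) ⊆ rim (D Ω (p ⊓ q) s) := by
  have hsup : p ⊔ q = s := cover_sup h1 h2 hne
  subst hsup
  obtain ⟨h, hch, hsub⟩ := ma_ps8 hm p q h1 h2
  rw [D_cover hm h1, D_cover hm h2, D_eq hm hch]
  exact hsub

theorem Dne_cover {a b : S} (h : a ⋖ b) : Dne Ω a b := by
  obtain ⟨u, v, hv⟩ := (ma_ps3 hm a b h).2.1.1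
  exact ⟨u, v, by rw [D_cover hm h]; exact hv⟩

theorem claimC : ∀ (n : ℕ) {x y s : S}, x ≤ s → y ≤ s →
    (Set.Icc (x ⊓ y) s).ncard ≤ n →
    ∀ b, b ∈ rim (D Ω x s) → b ∈ rim (D Ω y s) → b ∈ rim (D Ω (x ⊓ y) s) := by
  intro n
  induction n with
  | zero =>
      intro x y s hxs hys hn b _ _
      exact absurd (Nat.le_zero.mp hn) (icc_pos (ma_icc hm) (inf_le_left.trans hxs)).ne'
  | succ n ih =>
      intro x y s hxs hys hn b hb1 hb2
      by_cases hxy : x ≤ y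
      · rw [D_rim_congr (inf_eq_left.mpr hxy)]; exact hb1
      by_cases hyx : y ≤ x
      · rw [D_rim_congr (inf_eq_right.mpr hyx)]; exact hb2
      have hsup : x ⊔ y ≤ s := sup_le hxs hys
      rcases hsup.lt_or_eq with hlt | hseq
      · obtain ⟨c, hcb, hc1⟩ := rim_factor hm le_sup_left hlt.le hb1
        obtain ⟨c', hcb', hc2⟩ := rim_factor hm le_sup_right hlt.le hb2
        obtain rfl : c = c' := (D_good hm hlt.le).1.2 _ _ _ hcb hcb'
        have hn' : (Set.Icc (x ⊓ y) (x ⊔ y)).ncard ≤ n :=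
          Nat.lt_succ_iff.mp (lt_of_lt_of_le (ncard_lt_aux (ma_icc hm) le_rfl hlt.le s
            ⟨inf_le_left.trans hxs, le_rfl⟩
            (fun hmem => absurd hmem.2 (not_le_of_gt hlt))) hn)
        exact rim_lift hm (inf_le_left.trans le_sup_left) hlt.le
          (ih le_sup_left le_sup_right hn' c hc1 hc2) hcb
      · have hxlt : x < s := lt_of_le_of_ne hxs (fun h => hyx (h ▸ hys))
        have hylt : y < s := lt_of_le_of_ne hys (fun h => hxy (h ▸ hxs))
        obtain ⟨xs, hxxs, hxscov⟩ := exists_cover_below (ma_icc hm) hxlt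
        obtain ⟨ys, hyys, hyscov⟩ := exists_cover_below (ma_icc hm) hylt
        have hnexy : xs ≠ ys := by
          rintro rfl
          exact absurd (hseq ▸ sup_le hxxs hyys : s ≤ xs) (not_le_of_gt hxscov.lt)
        have hbx : b ∈ rim (D Ω xs s) := rim_mono hm hxxs hxscov.le hb1
        have hby : b ∈ rim (D Ω ys s) := rim_mono hm hyys hyscov.le hb2
        have hbw : b ∈ rim (D Ω (xs ⊓ ys) s) := coverPS8 hm hxscov hyscov hnexy ⟨hbx, hby⟩
        set w := xs ⊓ ys with hw
        have hxyw : x ⊓ y ≤ w := le_inf (inf_le_left.trans hxxs) (inf_le_right.trans hyys)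
        have key : ∀ z zs : S, z ≤ zs → zs ⋖ s → w ≤ zs → x ⊓ y ≤ z →
            b ∈ rim (D Ω z s) → b ∈ rim (D Ω (z ⊓ w) s) := by
          intro z zs hzzs hcov hwzs hlow hbz
          have hj1s : z ⊔ w < s := lt_of_le_of_lt (sup_le hzzs hwzs) hcov.lt
          obtain ⟨c, hcb, hc1⟩ := rim_factor hm le_sup_left hj1s.le hbz
          obtain ⟨c', hcb', hc2⟩ := rim_factor hm le_sup_right hj1s.le hbw
          obtain rfl : c = c' := (D_good hm hj1s.le).1.2 _ _ _ hcb hcb'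
          have hn' : (Set.Icc (z ⊓ w) (z ⊔ w)).ncard ≤ n :=
            Nat.lt_succ_iff.mp (lt_of_lt_of_le (ncard_lt_aux (ma_icc hm)
              (le_inf hlow hxyw) hj1s.le s ⟨inf_le_left.trans hxs, le_rfl⟩
              (fun hmem => absurd hmem.2 (not_le_of_gt hj1s))) hn)
          exact rim_lift hm (inf_le_left.trans le_sup_left) hj1s.le
            (ih le_sup_left le_sup_right hn' c hc1 hc2) hcb
        have hbx1 : b ∈ rim (D Ω (x ⊓ w) s) :=
          key x xs hxxs hxscov inf_le_left inf_le_left hb1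
        have hby1 : b ∈ rim (D Ω (y ⊓ w) s) :=
          key y ys hyys hyscov inf_le_right inf_le_right hb2
        have hmeet : (x ⊓ w) ⊓ (y ⊓ w) = x ⊓ y :=
          le_antisymm
            (le_inf (inf_le_left.trans inf_le_left) (inf_le_right.trans inf_le_left))
            (le_inf (le_inf inf_le_left hxyw) (le_inf inf_le_right hxyw))
        have hj3 : (x ⊓ w) ⊔ (y ⊓ w) < s :=
          lt_of_le_of_lt
            (sup_le (inf_le_right.trans inf_le_left) (inf_le_right.trans inf_le_left)
              : (x ⊓ w) ⊔ (y ⊓ w) ≤ xs) hxscov.lt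
        obtain ⟨c, hcb, hc1⟩ := rim_factor hm le_sup_left hj3.le hbx1
        obtain ⟨c', hcb', hc2⟩ := rim_factor hm le_sup_right hj3.le hby1
        obtain rfl : c = c' := (D_good hm hj3.le).1.2 _ _ _ hcb hcb'
        have hn' : (Set.Icc ((x ⊓ w) ⊓ (y ⊓ w)) ((x ⊓ w) ⊔ (y ⊓ w))).ncard ≤ n :=
          Nat.lt_succ_iff.mp (lt_of_lt_of_le (ncard_lt_aux (ma_icc hm)
            hmeet.ge hj3.le s ⟨inf_le_left.trans hxs, le_rfl⟩
            (fun hmem => absurd hmem.2 (not_le_of_gt hj3))) hn)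
        have hc3 := ih le_sup_left le_sup_right hn' c hc1 hc2
        rw [D_rim_congr hmeet] at hc3
        exact rim_lift hm (hmeet.ge.trans (inf_le_left.trans le_sup_left)) hj3.le hc3 hcb

theorem claimC' : ∀ (n : ℕ) {x y a : S}, a ≤ x → a ≤ y →
    (Set.Icc a (x ⊔ y)).ncard ≤ n →
    ∀ u, u ∈ rdom (D Ω a x) → u ∈ rdom (D Ω a y) → u ∈ rdom (D Ω a (x ⊔ y)) := by
  intro n
  induction n with
  | zero =>
      intro x y a hax hay hn u _ _
      exact absurd (Nat.le_zero.mp hn) (icc_pos (ma_icc hm) (hax.trans le_sup_left)).ne'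
  | succ n ih =>
      intro x y a hax hay hn u hu1 hu2
      by_cases hxy : x ≤ y
      · rw [D_rdom_congr (sup_eq_right.mpr hxy)]; exact hu2
      by_cases hyx : y ≤ x
      · rw [D_rdom_congr (sup_eq_left.mpr hyx)]; exact hu1
      have hinf : a ≤ x ⊓ y := le_inf hax hay
      rcases hinf.lt_or_eq with hlt | heq
      · obtain ⟨c, hc1, hcx⟩ := rdom_factor hm hlt.le inf_le_left hu1
        obtain ⟨c', hc1', hcy⟩ := rdom_factor hm hlt.le inf_le_right hu2
        obtain rfl : c = c' := (D_good hm hlt.le).1.1 _ _ _ hc1 hc1'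
        have hn' : (Set.Icc (x ⊓ y) (x ⊔ y)).ncard ≤ n :=
          Nat.lt_succ_iff.mp (lt_of_lt_of_le (ncard_lt_aux (ma_icc hm) hlt.le le_rfl a
            ⟨le_rfl, hax.trans le_sup_left⟩
            (fun hmem => absurd hmem.1 (not_le_of_gt hlt))) hn)
        exact rdom_lift hm hlt.le (inf_le_left.trans le_sup_left) hc1
          (ih inf_le_left inf_le_right hn' c hcx hcy)
      · have haxlt : a < x := lt_of_le_of_ne hax (fun h => hxy (h ▸ hay))
        have haylt : a < y := lt_of_le_of_ne hay (fun h => hyx (h ▸ hax))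
        obtain ⟨x', hax', hx'x⟩ := exists_cover_above (ma_icc hm) haxlt
        obtain ⟨y', hay', hy'y⟩ := exists_cover_above (ma_icc hm) haylt
        have hnexy : x' ≠ y' := by
          rintro rfl
          have : x' ≤ a := by rw [heq]; exact le_inf hx'x hy'y
          exact absurd this (not_le_of_gt hax'.lt)
        have hux' : u ∈ rdom (D Ω a x') := rdom_anti hm hax'.le hx'x hu1
        have huy' : u ∈ rdom (D Ω a y') := rdom_anti hm hay'.le hy'y hu2
        have huw : u ∈ rdom (D Ω a (x' ⊔ y')) := coverPS7 hm hax' hay' hnexy ⟨hux', huy'⟩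
        set w := x' ⊔ y' with hwdef
        have hwxy : w ≤ x ⊔ y := sup_le (hx'x.trans le_sup_left) (hy'y.trans le_sup_right)
        have key : ∀ z z' : S, a ⋖ z' → z' ≤ z → z' ≤ w → z ≤ x ⊔ y →
            u ∈ rdom (D Ω a z) → u ∈ rdom (D Ω a (z ⊔ w)) := by
          intro z z' hcov hz'z hz'w hzxy huz
          have ham1 : a < z ⊓ w := lt_of_lt_of_le hcov.lt (le_inf hz'z hz'w)
          obtain ⟨c, hc1, hcz⟩ := rdom_factor hm ham1.le inf_le_left huz
          obtain ⟨c', hc1', hcw⟩ := rdom_factor hm ham1.le inf_le_right huw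
          obtain rfl : c = c' := (D_good hm ham1.le).1.1 _ _ _ hc1 hc1'
          have hn' : (Set.Icc (z ⊓ w) (z ⊔ w)).ncard ≤ n :=
            Nat.lt_succ_iff.mp (lt_of_lt_of_le (ncard_lt_aux (ma_icc hm)
              ham1.le (sup_le hzxy hwxy) a ⟨le_rfl, hax.trans le_sup_left⟩
              (fun hmem => absurd hmem.1 (not_le_of_gt ham1))) hn)
          exact rdom_lift hm ham1.le (inf_le_left.trans le_sup_left) hc1
            (ih inf_le_left inf_le_right hn' c hcz hcw)
        have hux1 : u ∈ rdom (D Ω a (x ⊔ w)) :=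
          key x x' hax' hx'x le_sup_left le_sup_left hu1
        have huy1 : u ∈ rdom (D Ω a (y ⊔ w)) :=
          key y y' hay' hy'y le_sup_right le_sup_right hu2
        have hXY : (x ⊔ w) ⊔ (y ⊔ w) = x ⊔ y :=
          le_antisymm (sup_le (sup_le le_sup_left hwxy) (sup_le le_sup_right hwxy))
            (sup_le (le_sup_left.trans le_sup_left) (le_sup_left.trans le_sup_right))
        have ham2 : a < (x ⊔ w) ⊓ (y ⊔ w) :=
          lt_of_lt_of_le hax'.lt
            ((le_sup_left : x' ≤ w).trans (le_inf le_sup_right le_sup_right))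
        obtain ⟨c, hc1, hcX⟩ := rdom_factor hm ham2.le inf_le_left hux1
        obtain ⟨c', hc1', hcY⟩ := rdom_factor hm ham2.le inf_le_right huy1
        obtain rfl : c = c' := (D_good hm ham2.le).1.1 _ _ _ hc1 hc1'
        have hn' : (Set.Icc ((x ⊔ w) ⊓ (y ⊔ w)) ((x ⊔ w) ⊔ (y ⊔ w))).ncard ≤ n :=
          Nat.lt_succ_iff.mp (lt_of_lt_of_le (ncard_lt_aux (ma_icc hm)
            ham2.le hXY.le a ⟨le_rfl, hax.trans le_sup_left⟩
            (fun hmem => absurd hmem.1 (not_le_of_gt ham2))) hn)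
        have hres := rdom_lift hm ham2.le (inf_le_left.trans le_sup_left) hc1
          (ih inf_le_left inf_le_right hn' c hcX hcY)
        rwa [D_rdom_congr hXY] at hres

theorem lemM {p q1 q2 : S} (h1 : p ≤ q1) (h2 : p ≤ q2)
    (d1 : Dne Ω p q1) (d2 : Dne Ω p q2) : Dne Ω p (q1 ⊔ q2) := by
  obtain ⟨v, hv⟩ := claimC' hm _ h1 h2 le_rfl ⊤
    (top_mem_rdom hm h1 d1) (top_mem_rdom hm h2 d2)
  exact ⟨⊤, v, hv⟩

theorem lemJ {p1 p2 q : S} (h1 : p1 ≤ q) (h2 : p2 ≤ q)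
    (d1 : Dne Ω p1 q) (d2 : Dne Ω p2 q) : Dne Ω (p1 ⊓ p2) q := by
  obtain ⟨u, hu⟩ := claimC hm _ h1 h2 le_rfl ⊥
    (bot_mem_rim hm h1 d1) (bot_mem_rim hm h2 d2)
  exact ⟨u, ⊥, hu⟩

theorem lemA : ∀ (n : ℕ) {p q r : S}, p ≤ q → p ≤ r →
    (Set.Icc p (q ⊔ r)).ncard ≤ n → Dne Ω p q → Dne Ω r (q ⊔ r) := by
  intro n
  induction n with
  | zero =>
      intro p q r hpq hpr hn _
      exact absurd (Nat.le_zero.mp hn) (icc_pos (ma_icc hm) (hpq.trans le_sup_left)).ne'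
  | succ n ih =>
      intro p q r hpq hpr hn hd
      by_cases hqr : q ≤ r
      · exact (Dne_congr rfl (sup_eq_right.mpr hqr)).mpr (Dne_refl hm r)
      have hpq' : p < q := lt_of_le_of_ne hpq (fun h => hqr (h ▸ hpr))
      obtain ⟨t, hpt, htq⟩ := exists_cover_above (ma_icc hm) hpq'
      by_cases htr : t ≤ r
      · have hd' : Dne Ω t q := D_shrink hm hpt.le htq le_rfl hd
        have hn' : (Set.Icc t (q ⊔ r)).ncard ≤ n :=
          Nat.lt_succ_iff.mp (lt_of_lt_of_le (ncard_lt_aux (ma_icc hm) hpt.le le_rfl p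
            ⟨le_rfl, hpq.trans le_sup_left⟩
            (fun hmem => absurd hmem.1 (not_le_of_gt hpt.lt))) hn)
        exact ih htq htr hn' hd'
      · by_cases hrp : r ≤ p
        · obtain rfl : r = p := le_antisymm hrp hpr
          exact (Dne_congr rfl (sup_eq_left.mpr hpq)).mpr hd
        · have hpr' : p < r := lt_of_le_of_ne hpr (fun h => hrp h.ge)
          obtain ⟨u, hpu, hur⟩ := exists_cover_above (ma_icc hm) hpr'
          have hut : u ≠ t := fun h => htr (h ▸ hur)
          have hdut : Dne Ω p (u ⊔ t) := by
            obtain ⟨v, hv⟩ := coverPS7 hm hpu hpt hut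
              ⟨top_mem_rdom hm hpu.le (Dne_cover hm hpu),
               top_mem_rdom hm hpt.le (Dne_cover hm hpt)⟩
            exact ⟨⊤, v, hv⟩
          have hM : Dne Ω p (q ⊔ (u ⊔ t)) :=
            lemM hm hpq (hpu.le.trans le_sup_left) hd hdut
          have hshr : Dne Ω u (q ⊔ u) := D_shrink hm hpu.le le_sup_right
            (sup_le le_sup_left ((le_sup_left : u ≤ u ⊔ t).trans le_sup_right)) hM
          have hn' : (Set.Icc u ((q ⊔ u) ⊔ r)).ncard ≤ n :=
            Nat.lt_succ_iff.mp (lt_of_lt_of_le (ncard_lt_aux (ma_icc hm) hpu.le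
              (sup_le (sup_le le_sup_left (hur.trans le_sup_right)) le_sup_right) p
              ⟨le_rfl, hpq.trans le_sup_left⟩
              (fun hmem => absurd hmem.1 (not_le_of_gt hpu.lt))) hn)
          have hres := ih (le_sup_right : u ≤ q ⊔ u) hur hn' hshr
          exact D_shrink hm le_rfl le_sup_right
            (sup_le (le_sup_left.trans le_sup_left) le_sup_right) hres

theorem lemA' : ∀ (n : ℕ) {p q r : S}, p ≤ q → r ≤ q →
    (Set.Icc (p ⊓ r) q).ncard ≤ n → Dne Ω p q → Dne Ω (p ⊓ r) r := by
  intro n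
  induction n with
  | zero =>
      intro p q r hpq hrq hn _
      exact absurd (Nat.le_zero.mp hn) (icc_pos (ma_icc hm) (inf_le_left.trans hpq)).ne'
  | succ n ih =>
      intro p q r hpq hrq hn hd
      by_cases hrp : r ≤ p
      · exact (Dne_congr (inf_eq_right.mpr hrp) rfl).mpr (Dne_refl hm r)
      have hpq' : p < q := lt_of_le_of_ne hpq (fun h => hrp (by rw [h]; exact hrq))
      obtain ⟨t, hpt, htq⟩ := exists_cover_below (ma_icc hm) hpq'
      by_cases hrt : r ≤ t
      · have hd' : Dne Ω p t := D_shrink hm le_rfl hpt htq.le hd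
        have hn' : (Set.Icc (p ⊓ r) t).ncard ≤ n :=
          Nat.lt_succ_iff.mp (lt_of_lt_of_le (ncard_lt_aux (ma_icc hm) le_rfl htq.le q
            ⟨inf_le_left.trans hpq, le_rfl⟩
            (fun hmem => absurd hmem.2 (not_le_of_gt htq.lt))) hn)
        exact ih hpt hrt hn' hd'
      · by_cases hqr : q ≤ r
        · obtain rfl : r = q := le_antisymm hrq hqr
          exact (Dne_congr (inf_eq_left.mpr hpq) rfl).mpr hd
        · have hrq' : r < q := lt_of_le_of_ne hrq (fun h => hqr h.ge)
          obtain ⟨v, hrv, hvq⟩ := exists_cover_below (ma_icc hm) hrq'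
          have hvt : v ≠ t := fun h => hrt (h ▸ hrv)
          have hdvt : Dne Ω (v ⊓ t) q := by
            obtain ⟨u0, hu0⟩ := coverPS8 hm hvq htq hvt
              ⟨bot_mem_rim hm hvq.le (Dne_cover hm hvq),
               bot_mem_rim hm htq.le (Dne_cover hm htq)⟩
            exact ⟨u0, ⊥, hu0⟩
          have hJ : Dne Ω (p ⊓ (v ⊓ t)) q := lemJ hm hpq (inf_le_left.trans hvq.le) hd hdvt
          have hshr : Dne Ω (p ⊓ v) v := D_shrink hm
            (le_inf inf_le_left (inf_le_right.trans inf_le_left)) inf_le_right hvq.le hJ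
          have hn' : (Set.Icc ((p ⊓ v) ⊓ r) v).ncard ≤ n :=
            Nat.lt_succ_iff.mp (lt_of_lt_of_le (ncard_lt_aux (ma_icc hm)
              (le_inf (le_inf inf_le_left (inf_le_right.trans hrv)) inf_le_right) hvq.le q
              ⟨inf_le_left.trans hpq, le_rfl⟩
              (fun hmem => absurd hmem.2 (not_le_of_gt hvq.lt))) hn)
          have hres := ih (inf_le_right : p ⊓ v ≤ v) hrv hn' hshr
          exact D_shrink hm (le_inf (inf_le_left.trans inf_le_left) inf_le_right)
            inf_le_right le_rfl hres

theorem Dne_sup {x x' y y' : S} (h1 : x ≤ x') (h2 : y ≤ y')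
    (d1 : Dne Ω x x') (d2 : Dne Ω y y') : Dne Ω (x ⊔ y) (x' ⊔ y') := by
  have hA1 : Dne Ω (x ⊔ y) (x' ⊔ (x ⊔ y)) := lemA hm _ h1 le_sup_left le_rfl d1
  have hA2 : Dne Ω (x ⊔ y) (y' ⊔ (x ⊔ y)) := lemA hm _ h2 le_sup_right le_rfl d2
  have hMM := lemM hm le_sup_right le_sup_right hA1 hA2
  exact D_shrink hm le_rfl (sup_le_sup h1 h2)
    (sup_le (le_sup_left.trans le_sup_left) (le_sup_left.trans le_sup_right)) hMM

theorem Dne_inf {x x' y y' : S} (h1 : x ≤ x') (h2 : y ≤ y')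
    (d1 : Dne Ω x x') (d2 : Dne Ω y y') : Dne Ω (x ⊓ y) (x' ⊓ y') := by
  have hA1 : Dne Ω (x ⊓ (x' ⊓ y')) (x' ⊓ y') := lemA' hm _ h1 inf_le_left le_rfl d1
  have hA2 : Dne Ω (y ⊓ (x' ⊓ y')) (x' ⊓ y') := lemA' hm _ h2 inf_le_right le_rfl d2
  have hJJ := lemJ hm inf_le_right inf_le_right hA1 hA2
  exact D_shrink hm
    (le_inf (inf_le_left.trans inf_le_left) (inf_le_right.trans inf_le_left))
    (inf_le_inf h1 h2) le_rfl hJJ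

omit hm in
/-- The tolerance associated to the minimal data. -/
def Gam (Ω : ∀ x y : S, x ⋖ y → L x → L y → Prop) : S → S → Prop :=
  fun x y => Dne Ω (x ⊓ y) (x ⊔ y)

theorem gam_tol : IsTolerance (Gam Ω) := by
  refine ⟨?_, ?_, ?_, ?_⟩
  · intro x
    exact (Dne_congr (inf_idem x) (sup_idem x)).mpr (Dne_refl hm x)
  · intro x y h
    exact (Dne_congr (inf_comm x y) (sup_comm x y)).mp h
  · intro a b c d h1 h2
    have hs := Dne_sup hm inf_le_sup inf_le_sup h1 h2
    exact D_shrink hm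
      (sup_le (le_inf (inf_le_left.trans le_sup_left) (inf_le_right.trans le_sup_left))
        (le_inf (inf_le_left.trans le_sup_right) (inf_le_right.trans le_sup_right)))
      inf_le_sup
      (sup_le (sup_le (le_sup_left.trans le_sup_left) (le_sup_left.trans le_sup_right))
        (sup_le (le_sup_right.trans le_sup_left) (le_sup_right.trans le_sup_right))) hs
  · intro a b c d h1 h2
    have hs := Dne_inf hm inf_le_sup inf_le_sup h1 h2
    exact D_shrink hm
      (le_inf (le_inf (inf_le_left.trans inf_le_left) (inf_le_right.trans inf_le_left))
        (le_inf (inf_le_left.trans inf_le_right) (inf_le_right.trans inf_le_right)))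
      inf_le_sup
      (sup_le (le_inf (inf_le_left.trans le_sup_left) (inf_le_right.trans le_sup_left))
        (le_inf (inf_le_left.trans le_sup_right) (inf_le_right.trans le_sup_right))) hs

theorem gam_of_le {x y : S} (hle : x ≤ y) (h : Dne Ω x y) : Gam Ω x y :=
  (Dne_congr (inf_eq_left.mpr hle) (sup_eq_right.mpr hle)).mpr h

theorem dne_of_gam {x y : S} (hle : x ≤ y) (h : Gam Ω x y) : Dne Ω x y :=
  D_shrink hm inf_le_left hle le_sup_right (show Dne Ω (x ⊓ y) (x ⊔ y) from h)

theorem forward : BaselineAxioms L (Gam Ω) (fun x y _ _ => D Ω x y) := by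
  obtain ⟨hIcc, hup, hdn, hfin, hmod, hcompl, hPS3, -, -, -⟩ := id hm
  refine ⟨hIcc, hup, hdn, gam_tol hm, hfin, hmod, hcompl, ?_, ?_, ?_, ?_, ?_, ?_, ?_⟩
  · -- PS3
    intro x y hle hγ
    have hne : Dne Ω x y := dne_of_gam hm hle hγ
    obtain ⟨u0, v0, h0⟩ := hne
    obtain ⟨⟨hfun, hinj⟩, hhom, hdup, hdinf, hrdown, hrsup⟩ := D_good hm hle
    exact ⟨⟨hfun, hinj⟩, ⟨⟨u0, v0, h0⟩, hdup, hdinf⟩, ⟨⟨v0, u0, h0⟩, hrdown, hrsup⟩, hhom⟩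
  · -- PS4
    intro x hγ
    exact D_self hm x
  · -- PS5
    intro x y z hxy hyz hγ1 hγ2 hne
    obtain ⟨b, ⟨a0, hab⟩, c, hbc⟩ := hne
    refine gam_of_le hm (hxy.trans hyz) ⟨a0, c, ?_⟩
    rw [D_comp hm hxy hyz]
    exact ⟨b, hab, hbc⟩
  · -- PS6
    intro x z y hxz hzy hγxy hγxz hγzy
    exact D_comp hm hxz hzy
  · -- PS7
    intro x y hγ h1 h2 h3 b hb
    exact claimC hm _ le_sup_left le_sup_right le_rfl b hb.1 hb.2
  · -- PS8
    intro x y hγ h1 h2 h3 u hu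
    exact claimC' hm _ inf_le_left inf_le_right le_rfl u hu.1 hu.2
  · -- PS9
    intro x y h
    exact gam_of_le hm h.le (Dne_cover hm h)
end PolyAux

theorem minimal_iff_baseline {S : Type u} [Lattice S] (L : S → Type v)
    [∀ x, Lattice (L x)] [∀ x, BoundedOrder (L x)]
    (Ω : ∀ x y : S, x ⋖ y → L x → L y → Prop) :
    MinimalAxioms L Ω ↔
      ∃ (γ : S → S → Prop) (Φ : ∀ x y : S, x ≤ y → γ x y → (L x → L y → Prop)),
        BaselineAxioms L γ Φ ∧
        ∀ x y : S, ∀ (h : x ⋖ y) (hγ : γ x y), Φ x y h.le hγ = Ω x y h := by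
  constructor
  · intro hm
    exact ⟨PolyAux.Gam Ω, fun x y _ _ => PolyAux.D Ω x y, PolyAux.forward hm,
      fun x y h hγ => PolyAux.D_cover hm h⟩
  · rintro ⟨γ, Φ, hbase, hΩ⟩
    obtain ⟨hIcc, hup, hdn, ⟨hrefl, hsymm, hsupc, hinfc⟩, hfin, hmod, hcompl,
      hPS3, hPS4, hPS5, hPS6, hPS7, hPS8, hPS9⟩ := hbase
    -- every connection is a composite along a saturated chain
    have φchain : ∀ (n : ℕ) (x y : S) (hle : x ≤ y) (hγ : γ x y),
        (Set.Icc x y).ncard ≤ n → ChainComp L Ω x y (Φ x y hle hγ) := by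
      intro n
      induction n with
      | zero =>
          intro x y hle hγ hn
          exact absurd (Nat.le_zero.mp hn)
            ((Set.ncard_pos (hIcc x y)).mpr ⟨x, le_rfl, hle⟩).ne'
      | succ n ih =>
          intro x y hle hγ hn
          rcases eq_or_lt_of_le hle with rfl | hlt
          · have he : Φ x x hle hγ = fun u v => u = v := hPS4 x hγ
            rw [he]
            exact .refl x
          · obtain ⟨z, hxz, hzy⟩ := PolyAux.exists_cover_above hIcc hlt
            have hγxz : γ x z := hPS9 x z hxz
            have hγzy : γ z y := by
              have := hsupc x y z z hγ (hrefl z)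
              rwa [sup_eq_right.mpr hxz.le, sup_eq_left.mpr hzy] at this
            have h6 : Φ x y hle hγ =
                Relation.Comp (Φ x z hxz.le hγxz) (Φ z y hzy hγzy) :=
              hPS6 x z y hxz.le hzy hγ hγxz hγzy
            rw [h6, hΩ x z hxz hγxz]
            refine .cons hxz (ih z y hzy hγzy ?_)
            exact Nat.lt_succ_iff.mp (lt_of_lt_of_le
              (PolyAux.ncard_lt_aux hIcc hxz.le le_rfl x ⟨le_rfl, hle⟩
                (fun hmem => absurd hmem.1 (not_le_of_gt hxz.lt))) hn)
    refine ⟨hIcc, hup, hdn, hfin, hmod, hcompl, ?_, ?_, ?_, ?_⟩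
    · -- PS3⁻
      intro x y h
      rw [← hΩ x y h (hPS9 x y h)]
      exact hPS3 x y h.le (hPS9 x y h)
    · -- PS6⁻∧
      intro x y hx hy
      have hγax : γ (x ⊓ y) x := hPS9 _ _ hx
      have hγay : γ (x ⊓ y) y := hPS9 _ _ hy
      have hγxs : γ x (x ⊔ y) := by
        have := hsupc x x (x ⊓ y) y (hrefl x) hγay
        rwa [sup_eq_left.mpr inf_le_left] at this
      have hγys : γ y (x ⊔ y) := by
        have := hsupc (x ⊓ y) x y y hγax (hrefl y)
        rwa [sup_eq_right.mpr inf_le_right] at this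
      have hγas : γ (x ⊓ y) (x ⊔ y) := by
        have := hsupc (x ⊓ y) x (x ⊓ y) y hγax hγay
        rwa [sup_idem] at this
      refine ⟨Φ x (x ⊔ y) le_sup_left hγxs, Φ y (x ⊔ y) le_sup_right hγys,
        φchain _ x (x ⊔ y) le_sup_left hγxs le_rfl,
        φchain _ y (x ⊔ y) le_sup_right hγys le_rfl, ?_⟩
      have e1 : Φ (x ⊓ y) (x ⊔ y) (hx.le.trans le_sup_left) hγas =
          Relation.Comp (Φ (x ⊓ y) x hx.le hγax) (Φ x (x ⊔ y) le_sup_left hγxs) :=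
        hPS6 _ x _ hx.le le_sup_left hγas hγax hγxs
      have e2 : Φ (x ⊓ y) (x ⊔ y) (hy.le.trans le_sup_right) hγas =
          Relation.Comp (Φ (x ⊓ y) y hy.le hγay) (Φ y (x ⊔ y) le_sup_right hγys) :=
        hPS6 _ y _ hy.le le_sup_right hγas hγay hγys
      rw [← hΩ _ _ hx hγax, ← hΩ _ _ hy hγay]
      exact e1.symm.trans e2
    · -- PS7⁻∧
      intro x y hx hy
      have hγax : γ (x ⊓ y) x := hPS9 _ _ hx
      have hγay : γ (x ⊓ y) y := hPS9 _ _ hy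
      have hγxs : γ x (x ⊔ y) := by
        have := hsupc x x (x ⊓ y) y (hrefl x) hγay
        rwa [sup_eq_left.mpr inf_le_left] at this
      have hγys : γ y (x ⊔ y) := by
        have := hsupc (x ⊓ y) x y y hγax (hrefl y)
        rwa [sup_eq_right.mpr inf_le_right] at this
      have hγas : γ (x ⊓ y) (x ⊔ y) := by
        have := hsupc (x ⊓ y) x (x ⊓ y) y hγax hγay
        rwa [sup_idem] at this
      have hγxy : γ x y := by
        have := hinfc x (x ⊔ y) (x ⊔ y) y hγxs (hsymm _ _ hγys)
        rwa [inf_sup_self, inf_eq_right.mpr le_sup_right] at this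
      refine ⟨Φ (x ⊓ y) (x ⊔ y) (inf_le_left.trans le_sup_left) hγas,
        φchain _ _ _ _ hγas le_rfl, ?_⟩
      rw [← hΩ _ _ hx hγax, ← hΩ _ _ hy hγay]
      exact hPS8 x y hγxy hγax hγay hγas
    · -- PS8⁻∨
      intro x y hx hy
      have hγxs : γ x (x ⊔ y) := hPS9 _ _ hx
      have hγys : γ y (x ⊔ y) := hPS9 _ _ hy
      have hγxy : γ x y := by
        have := hinfc x (x ⊔ y) (x ⊔ y) y hγxs (hsymm _ _ hγys)
        rwa [inf_sup_self, inf_eq_right.mpr le_sup_right] at this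
      have hγax : γ (x ⊓ y) x := by
        have := hinfc x y x x hγxy (hrefl x)
        rw [inf_idem, inf_comm y x] at this
        exact hsymm _ _ this
      have hγay : γ (x ⊓ y) y := by
        have := hinfc y x y y (hsymm _ _ hγxy) (hrefl y)
        rw [inf_idem] at this
        exact hsymm _ _ this
      have hγas : γ (x ⊓ y) (x ⊔ y) := by
        have := hsupc (x ⊓ y) x (x ⊓ y) y hγax hγay
        rwa [sup_idem] at this
      refine ⟨Φ (x ⊓ y) (x ⊔ y) (inf_le_left.trans le_sup_left) hγas,
        φchain _ _ _ _ hγas le_rfl, ?_⟩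
      rw [← hΩ _ _ hx hγxs, ← hΩ _ _ hy hγys]
      exact hPS7 x y hγxy hγxs hγys hγas
end
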